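/- arXiv:1008.1020 — 5 statements merged into one kernel-verified Lean document; each statement's English description precedes it below -/
import Mathlib

section
/- Let $g\in L^2(0,T;\mathbb{R}^n)$ be defined from two functions $a,b\in L^\infty(0,T;\mathbb{R}^n)$ and $\alpha\in[0,1]$ as follows: for $\varepsilon>0$ set $g_\varepsilon(t)=a(t)$ if the fractional part of $t/\varepsilon$ lies in $[0,\alpha)$ and $g_\varepsilon(t)=b(t)$ otherwise. Then $g_\varepsilon\to \alpha a+(1-\alpha)b$ weakly in $L^2(0,T;\mathbb{R}^n)$ as $\varepsilon\to 0^+$. -/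
/-!
Subtracting its mean `m = ∫₀¹ f`, a bounded `1`-periodic `f` becomes a function whose primitive
`F` is again `1`-periodic, hence bounded; so `ε F(t/ε)` is an `O(ε)` primitive of `f(t/ε) - m`, and
an integration by parts gives `∫ (f(t/ε) - m) v(t) dt = O(ε)` for every `C¹` test function `v`.
The functionals `h ↦ ∫ f(t/ε) h(t) dt` are bounded on `L¹` uniformly in `ε`, and smooth functions
are dense in `L¹`, so `∫ f(t/ε) h(t) dt → m ∫ h` for all integrable `h`. The theorem is the case
`f = 1_{fract < α}`, of mean `α`, and `h = ⟪a - b, φ⟫`, since `⟪g_ε, φ⟫ = f(t/ε) h + ⟪b, φ⟫`.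
-/

open MeasureTheory Set Filter Topology intervalIntegral
open scoped Interval RealInnerProductSpace ContDiff ENNReal

theorem Measurable.intervalIntegrable_of_norm_le {f : ℝ → ℝ} {C : ℝ} (hfm : Measurable f)
    (hC : ∀ x, ‖f x‖ ≤ C) (a b : ℝ) : IntervalIntegrable f volume a b :=
  (intervalIntegrable_const (c := C)).mono_fun hfm.aestronglyMeasurable
    (ae_of_all _ fun x => (hC x).trans (le_abs_self C))

theorem IntervalIntegrable.bdd_mul {w h : ℝ → ℝ} {a b C : ℝ}
    (hh : IntervalIntegrable h volume a b) (hwm : AEStronglyMeasurable w) (hw : ∀ t, ‖w t‖ ≤ C) :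
    IntervalIntegrable (fun t => w t * h t) volume a b :=
  intervalIntegrable_iff.2 ((intervalIntegrable_iff.1 hh).bdd_mul hwm.restrict (ae_of_all _ hw))

theorem IntervalIntegrable.norm_integral_mul_le {w h : ℝ → ℝ} {a b C : ℝ}
    (hh : IntervalIntegrable h volume a b) (hw : ∀ t, ‖w t‖ ≤ C) :
    ‖∫ t in a..b, w t * h t‖ ≤ C * ∫ t in Ι a b, ‖h t‖ := by
  rw [← MeasureTheory.integral_const_mul]
  refine norm_integral_le_integral_norm_uIoc.trans (integral_mono_of_nonneg
    (ae_of_all _ fun _ => norm_nonneg _) ((intervalIntegrable_iff.1 hh).norm.const_mul C)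
    (ae_of_all _ fun t => ?_))
  change ‖w t * h t‖ ≤ C * ‖h t‖
  rw [norm_mul]
  exact mul_le_mul_of_nonneg_right (hw t) (norm_nonneg _)

theorem IntervalIntegrable.exists_hasCompactSupport_integral_norm_sub_le {h : ℝ → ℝ} {a b : ℝ}
    (hh : IntervalIntegrable h volume a b) {δ : ℝ} (hδ : 0 < δ) :
    ∃ u : ℝ → ℝ, Continuous u ∧ HasCompactSupport u ∧ ∫ t in Ι a b, ‖h t - u t‖ ≤ δ := by
  have hH := (intervalIntegrable_iff.1 hh).integrable_indicator measurableSet_uIoc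
  obtain ⟨u, hu_supp, hHu, hu_cont, hu_int⟩ := hH.exists_hasCompactSupport_integral_sub_le hδ
  refine ⟨u, hu_cont, hu_supp, ?_⟩
  calc ∫ t in Ι a b, ‖h t - u t‖ = ∫ t in Ι a b, ‖(Ι a b).indicator h t - u t‖ :=
        setIntegral_congr_fun measurableSet_uIoc fun t ht => by simp [indicator_of_mem ht]
    _ ≤ ∫ t, ‖(Ι a b).indicator h t - u t‖ :=
        setIntegral_le_integral (hH.sub hu_int).norm (ae_of_all _ fun _ => norm_nonneg _)
    _ ≤ δ := hHu

theorem IntervalIntegrable.exists_contDiff_integral_norm_sub_le {h : ℝ → ℝ} {a b : ℝ}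
    (hh : IntervalIntegrable h volume a b) {δ : ℝ} (hδ : 0 < δ) :
    ∃ v : ℝ → ℝ, ContDiff ℝ ∞ v ∧ ∫ t in Ι a b, ‖h t - v t‖ ≤ δ := by
  obtain ⟨u, hu_cont, hu_supp, hhu⟩ :=
    hh.exists_hasCompactSupport_integral_norm_sub_le (half_pos hδ)
  have hL : 0 < |b - a| + 1 := by positivity
  obtain ⟨v, hv, huv⟩ := (hu_supp.uniformContinuous_of_continuous hu_cont).exists_contDiff_dist_le
    (div_pos (half_pos hδ) hL)
  refine ⟨v, hv, ?_⟩
  have hh' : IntegrableOn h (Ι a b) := intervalIntegrable_iff.1 hh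
  have hu_int : IntegrableOn u (Ι a b) := hu_cont.integrableOn_uIoc
  have hv_int : IntegrableOn v (Ι a b) := hv.continuous.integrableOn_uIoc
  have huv' : ∫ t in Ι a b, ‖u t - v t‖ ≤ δ / 2 :=
    calc ∫ t in Ι a b, ‖u t - v t‖ ≤ ∫ t in Ι a b, δ / 2 / (|b - a| + 1) :=
          setIntegral_mono_on (hu_int.sub hv_int).norm
            (integrableOn_const (by simp [Real.volume_uIoc])) measurableSet_uIoc
            fun t _ => by rw [← dist_eq_norm, dist_comm]; exact (huv t).le
      _ = δ / 2 * (|b - a| / (|b - a| + 1)) := by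
          rw [setIntegral_const, smul_eq_mul, measureReal_def, Real.volume_uIoc,
            ENNReal.toReal_ofReal (abs_nonneg _)]
          ring
      _ ≤ δ / 2 * 1 := by
          gcongr
          exact (div_le_one hL).2 (by linarith)
      _ = δ / 2 := mul_one _
  calc ∫ t in Ι a b, ‖h t - v t‖ ≤ ∫ t in Ι a b, (‖h t - u t‖ + ‖u t - v t‖) :=
        setIntegral_mono_on (hh'.sub hv_int).norm
          ((hh'.sub hu_int).norm.add (hu_int.sub hv_int).norm) measurableSet_uIoc
          fun t _ => norm_sub_le_norm_sub_add_norm_sub _ _ _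
    _ = (∫ t in Ι a b, ‖h t - u t‖) + ∫ t in Ι a b, ‖u t - v t‖ :=
        integral_add (hh'.sub hu_int).norm (hu_int.sub hv_int).norm
    _ ≤ δ := by linarith

namespace Function.Periodic

variable {f : ℝ → ℝ} {C : ℝ}

theorem periodic_intervalIntegral_of_integral_eq_zero (hf : Periodic f 1)
    (hint : ∀ a b, IntervalIntegrable f volume a b) (h0 : ∫ x in 0..1, f x = 0) :
    Periodic (fun t => ∫ x in 0..t, f x) 1 := fun t => by
  simpa [h0] using hf.intervalIntegral_add_eq_add 0 t hint

theorem norm_intervalIntegral_le_of_integral_eq_zero (hf : Periodic f 1) (hfm : Measurable f)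
    (hC : ∀ x, ‖f x‖ ≤ C) (h0 : ∫ x in 0..1, f x = 0) (t : ℝ) :
    ‖∫ x in 0..t, f x‖ ≤ C := by
  have hF := hf.periodic_intervalIntegral_of_integral_eq_zero
    (hfm.intervalIntegrable_of_norm_le hC) h0
  have hfract : Int.fract t = t - ⌊t⌋ * 1 := by rw [mul_one]; rfl
  rw [← hF.sub_int_mul_eq ⌊t⌋, ← hfract]
  calc ‖∫ x in 0..Int.fract t, f x‖ ≤ C * |Int.fract t - 0| :=
        norm_integral_le_of_norm_le_const fun x _ => hC x
    _ ≤ C * 1 := by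
        rw [sub_zero, abs_of_nonneg (Int.fract_nonneg t)]
        exact mul_le_mul_of_nonneg_left (Int.fract_lt_one t).le ((norm_nonneg _).trans (hC 0))
    _ = C := mul_one C

theorem norm_intervalIntegral_comp_div_le (hf : Periodic f 1) (hfm : Measurable f)
    (hC : ∀ x, ‖f x‖ ≤ C) (h0 : ∫ x in 0..1, f x = 0) {ε : ℝ} (hε : ε ≠ 0) (a t : ℝ) :
    ‖∫ x in a..t, f (x / ε)‖ ≤ 2 * C * |ε| := by
  have hint := hfm.intervalIntegrable_of_norm_le hC
  rw [integral_comp_div f hε, ← integral_interval_sub_left (hint 0 _) (hint 0 _), norm_smul,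
    Real.norm_eq_abs]
  calc |ε| * ‖(∫ x in 0..t / ε, f x) - ∫ x in 0..a / ε, f x‖
      ≤ |ε| * (C + C) := by
        gcongr
        exact (norm_sub_le _ _).trans (add_le_add
          (hf.norm_intervalIntegral_le_of_integral_eq_zero hfm hC h0 _)
          (hf.norm_intervalIntegral_le_of_integral_eq_zero hfm hC h0 _))
    _ = 2 * C * |ε| := by ring

theorem norm_intervalIntegral_comp_div_mul_le (hf : Periodic f 1) (hfm : Measurable f)
    (hC : ∀ x, ‖f x‖ ≤ C) (h0 : ∫ x in 0..1, f x = 0) {v : ℝ → ℝ} (hv : ContDiff ℝ 1 v)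
    {a b M : ℝ} (hM : ∀ x ∈ [[a, b]], ‖deriv v x‖ ≤ M) {ε : ℝ} (hε : ε ≠ 0) :
    ‖∫ t in a..b, f (t / ε) * v t‖ ≤ 2 * C * |ε| * (‖v b‖ + M * |b - a|) := by
  set G : ℝ → ℝ := fun t => ∫ x in a..t, f (x / ε)
  have hfε : IntervalIntegrable (fun x => f (x / ε)) volume a b :=
    (hfm.comp (measurable_id.div_const ε)).intervalIntegrable_of_norm_le (fun x => hC _) a b
  have hG : ∀ t, ‖G t‖ ≤ 2 * C * |ε| :=
    hf.norm_intervalIntegral_comp_div_le hfm hC h0 hε a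
  have hderiv : ∀ᵐ t, t ∈ Ι a b → f (t / ε) * v t = v t * deriv G t := by
    filter_upwards [hfε.ae_hasDerivAt_integral] with t ht htab
    rw [(ht (uIoc_subset_uIcc htab) a left_mem_uIcc).deriv, mul_comm]
  -- integration by parts, with `G` the `O(ε)` primitive of `f (· / ε)` vanishing at `a`
  rw [integral_congr_ae hderiv,
    (hv.contDiffOn.absolutelyContinuousOnInterval).integral_mul_deriv_eq_deriv_mul
      (hfε.absolutelyContinuousOnInterval_intervalIntegral left_mem_uIcc)]
  have hGa : G a = 0 := integral_same
  have hrest : ‖∫ x in a..b, deriv v x * G x‖ ≤ M * (2 * C * |ε|) * |b - a| :=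
    norm_integral_le_of_norm_le_const fun x hx => by
      rw [norm_mul]
      exact mul_le_mul (hM x (uIoc_subset_uIcc hx)) (hG x) (norm_nonneg _)
        ((norm_nonneg _).trans (hM a left_mem_uIcc))
  calc ‖v b * G b - v a * G a - ∫ x in a..b, deriv v x * G x‖
      ≤ ‖v b‖ * (2 * C * |ε|) + M * (2 * C * |ε|) * |b - a| := by
        rw [hGa, mul_zero, sub_zero]
        refine (norm_sub_le _ _).trans (add_le_add ?_ hrest)
        rw [norm_mul]
        exact mul_le_mul_of_nonneg_left (hG b) (norm_nonneg _)
    _ = 2 * C * |ε| * (‖v b‖ + M * |b - a|) := by ring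

theorem tendsto_intervalIntegral_comp_div_mul_of_contDiff (hf : Periodic f 1)
    (hfm : Measurable f) (hC : ∀ x, ‖f x‖ ≤ C) (h0 : ∫ x in 0..1, f x = 0) {v : ℝ → ℝ}
    (hv : ContDiff ℝ 1 v) (a b : ℝ) :
    Tendsto (fun ε => ∫ t in a..b, f (t / ε) * v t) (𝓝[≠] 0) (𝓝 0) := by
  obtain ⟨M, hM⟩ := (isCompact_uIcc (a := a) (b := b)).exists_bound_of_continuousOn
    (hv.continuous_deriv le_rfl).continuousOn
  refine squeeze_zero_norm' (eventually_nhdsWithin_of_forall fun ε hε =>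
    hf.norm_intervalIntegral_comp_div_mul_le hfm hC h0 hv hM hε) ?_
  exact tendsto_nhdsWithin_of_tendsto_nhds (Continuous.tendsto' (by fun_prop) _ _ (by simp))

theorem tendsto_intervalIntegral_comp_div_mul_of_integral_eq_zero (hf : Periodic f 1)
    (hfm : Measurable f) (hC : ∀ x, ‖f x‖ ≤ C) (h0 : ∫ x in 0..1, f x = 0) {h : ℝ → ℝ}
    {a b : ℝ} (hh : IntervalIntegrable h volume a b) :
    Tendsto (fun ε => ∫ t in a..b, f (t / ε) * h t) (𝓝[≠] 0) (𝓝 0) := by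
  rw [Metric.tendsto_nhds]
  intro η hη
  have hC1 : 0 < C + 1 := by linarith [(norm_nonneg _).trans (hC 0)]
  -- `h ↦ ∫ f (t / ε) * h t` is `C`-Lipschitz for the `L¹` norm, uniformly in `ε`
  obtain ⟨v, hv, hhv⟩ := hh.exists_contDiff_integral_norm_sub_le
    (div_pos (half_pos hη) hC1)
  have hv_int : IntervalIntegrable v volume a b := hv.continuous.intervalIntegrable a b
  filter_upwards [Metric.tendsto_nhds.1 (hf.tendsto_intervalIntegral_comp_div_mul_of_contDiff
    hfm hC h0 (hv.of_le (by simp)) a b) _ (half_pos hη)] with ε hε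
  have hfε : AEStronglyMeasurable (fun t => f (t / ε)) :=
    (hfm.comp (measurable_id.div_const ε)).aestronglyMeasurable
  have hsplit : ∫ t in a..b, f (t / ε) * h t
      = (∫ t in a..b, f (t / ε) * (h t - v t)) + ∫ t in a..b, f (t / ε) * v t := by
    rw [← integral_add ((hh.sub hv_int).bdd_mul hfε fun t => hC _)
      (hv_int.bdd_mul hfε fun t => hC _)]
    simp only [mul_sub, sub_add_cancel]
  have happrox : ‖∫ t in a..b, f (t / ε) * (h t - v t)‖ ≤ η / 2 :=
    calc ‖∫ t in a..b, f (t / ε) * (h t - v t)‖ ≤ (C + 1) * (η / 2 / (C + 1)) :=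
          ((hh.sub hv_int).norm_integral_mul_le fun t => (hC _).trans (le_add_of_nonneg_right
            zero_le_one)).trans (mul_le_mul_of_nonneg_left hhv hC1.le)
      _ = η / 2 := mul_div_cancel₀ _ hC1.ne'
  rw [dist_zero_right] at hε ⊢
  rw [hsplit]
  linarith [norm_add_le (∫ t in a..b, f (t / ε) * (h t - v t)) (∫ t in a..b, f (t / ε) * v t)]

theorem tendsto_intervalIntegral_comp_div_mul (hf : Periodic f 1) (hfm : Measurable f)
    (hC : ∀ x, ‖f x‖ ≤ C) {h : ℝ → ℝ} {a b : ℝ} (hh : IntervalIntegrable h volume a b) :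
    Tendsto (fun ε => ∫ t in a..b, f (t / ε) * h t) (𝓝[≠] 0)
      (𝓝 ((∫ x in 0..1, f x) * ∫ t in a..b, h t)) := by
  set m := ∫ x in 0..1, f x
  have hf₀ : ∫ x in 0..1, (f x - m) = 0 := by
    rw [integral_sub (hfm.intervalIntegrable_of_norm_le hC 0 1) intervalIntegrable_const]
    simp [m]
  have hf' : Periodic (fun x => f x - m) 1 := fun x => by simp only [hf x]
  have hlim := hf'.tendsto_intervalIntegral_comp_div_mul_of_integral_eq_zero (hfm.sub_const m)
      (fun x => (norm_sub_le (f x) m).trans (add_le_add_left (hC x) ‖m‖)) hf₀ hh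
  have hsplit : ∀ ε, ∫ t in a..b, f (t / ε) * h t
      = (∫ t in a..b, (f (t / ε) - m) * h t) + m * ∫ t in a..b, h t := fun ε => by
    rw [← intervalIntegral.integral_const_mul, ← integral_add
      (hh.bdd_mul (by fun_prop : Measurable fun t => f (t / ε) - m).aestronglyMeasurable
        fun t => (norm_sub_le (f _) m).trans (add_le_add_left (hC _) ‖m‖)) (hh.const_mul m)]
    simp only [sub_mul, sub_add_cancel]
  simpa only [hsplit, zero_add] using hlim.add_const (m * ∫ t in a..b, h t)

end Function.Periodic

theorem MeasureTheory.MemLp.intervalIntegrable_inner {E : Type*} [NormedAddCommGroup E]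
    [InnerProductSpace ℝ E] {c φ : ℝ → E} {p : ℝ≥0∞} {a b C : ℝ} (hab : a ≤ b) (hp : 1 ≤ p)
    (hφ : MemLp φ p (volume.restrict (Ioc a b))) (hc : AEStronglyMeasurable c)
    (hC : ∀ t, ‖c t‖ ≤ C) :
    IntervalIntegrable (fun t => ⟪c t, φ t⟫) volume a b :=
  (intervalIntegrable_iff_integrableOn_Ioc_of_le hab).2 <|
    ((hφ.integrable hp).norm.const_mul C).mono'
      (hc.restrict.inner hφ.aestronglyMeasurable) (ae_of_all _ fun t =>
        (norm_inner_le_norm _ _).trans (mul_le_mul_of_nonneg_right (hC t) (norm_nonneg _)))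

theorem intervalIntegral_indicator_fract_lt {α : ℝ} (hα : α ∈ Icc (0 : ℝ) 1) :
    ∫ x in 0..1, {τ : ℝ | Int.fract τ < α}.indicator (1 : ℝ → ℝ) x = α := by
  have hEq : EqOn ({τ : ℝ | Int.fract τ < α}.indicator (1 : ℝ → ℝ)) ((Ioo 0 α).indicator 1)
      (Ioo 0 1) := fun x hx => by
    simp [indicator_apply, Int.fract_eq_self.2 ⟨hx.1.le, hx.2⟩, hx.1]
  rw [integral_of_le zero_le_one, integral_Ioc_eq_integral_Ioo,
    setIntegral_congr_fun measurableSet_Ioo hEq, integral_indicator_one measurableSet_Ioo,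
    measureReal_restrict_apply measurableSet_Ioo,
    inter_eq_left.2 (Ioo_subset_Ioo_right hα.2), Real.volume_real_Ioo_of_le hα.1, sub_zero]

theorem stmt_2 {n : ℕ} (T : ℝ) (hT : 0 < T) (α : ℝ) (hα : α ∈ Set.Icc (0:ℝ) 1)
    (a b : ℝ → EuclideanSpace ℝ (Fin n))
    (ha : Measurable a) (hb : Measurable b)
    (Ca Cb : ℝ) (hCa : ∀ t, ‖a t‖ ≤ Ca) (hCb : ∀ t, ‖b t‖ ≤ Cb)
    (g : ℝ → ℝ → EuclideanSpace ℝ (Fin n))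
    (hg : ∀ ε t, g ε t = if Int.fract (t / ε) < α then a t else b t)
    (φ : ℝ → EuclideanSpace ℝ (Fin n))
    (hφ : MemLp φ 2 (volume.restrict (Set.Ioc (0:ℝ) T))) :
    Filter.Tendsto (fun ε => ∫ t in (0:ℝ)..T, ⟪g ε t, φ t⟫)
      (nhdsWithin 0 (Set.Ioi 0))
      (nhds (∫ t in (0:ℝ)..T, ⟪α • a t + (1 - α) • b t, φ t⟫)) := by
  set w := {τ : ℝ | Int.fract τ < α}.indicator (1 : ℝ → ℝ)
  have hw : Function.Periodic w 1 := fun τ => by simp [w, indicator_apply, Int.fract_add_one]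
  have hwm : Measurable w :=
    measurable_one.indicator (measurableSet_lt measurable_fract measurable_const)
  have hw1 : ∀ τ, ‖w τ‖ ≤ 1 := fun τ => (norm_indicator_le_norm_self _ _).trans (by simp)
  have hab : IntervalIntegrable (fun t => ⟪a t - b t, φ t⟫) volume 0 T :=
    hφ.intervalIntegrable_inner hT.le one_le_two (ha.sub hb).aestronglyMeasurable
      fun t => (norm_sub_le _ _).trans (add_le_add (hCa t) (hCb t))
  have hb' : IntervalIntegrable (fun t => ⟪b t, φ t⟫) volume 0 T :=
    hφ.intervalIntegrable_inner hT.le one_le_two hb.aestronglyMeasurable hCb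
  have hlim := (hw.tendsto_intervalIntegral_comp_div_mul hwm hw1 hab).mono_left
    (nhdsGT_le_nhdsNE 0)
  rw [intervalIntegral_indicator_fract_lt hα] at hlim
  have hg' : ∀ ε, ∫ t in 0..T, ⟪g ε t, φ t⟫
      = (∫ t in 0..T, w (t / ε) * ⟪a t - b t, φ t⟫) + ∫ t in 0..T, ⟪b t, φ t⟫ := fun ε => by
    have hwε : Measurable fun t => w (t / ε) := by fun_prop
    rw [← integral_add (hab.bdd_mul hwε.aestronglyMeasurable fun t => hw1 _) hb']
    congr 1 with t
    simp only [hg, w, indicator_apply, mem_ofPred_eq, Pi.one_apply]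
    split_ifs <;> simp [inner_sub_left]
  have hR : ∫ t in 0..T, ⟪α • a t + (1 - α) • b t, φ t⟫
      = α * (∫ t in 0..T, ⟪a t - b t, φ t⟫) + ∫ t in 0..T, ⟪b t, φ t⟫ := by
    rw [← intervalIntegral.integral_const_mul, ← integral_add (hab.const_mul α) hb']
    congr 1 with t
    simp only [inner_add_left, inner_sub_left, real_inner_smul_left]
    ring
  simpa only [hg', hR] using hlim.add_const (∫ t in 0..T, ⟪b t, φ t⟫)
end

section
/- Let $\bar u$ be a minimizer of $J(u)=\int_0^T f^0(t,x(t;u),u(t))\,dt$ over all measurable controls $u:[0,T]\to U$, where $x(\cdot;u)$ solves $\dot x=f(t,x,u(t))$, $x(0)=x_0$. For $\alpha\in[0,1]$ and any measurable control $u$, define the relaxed dynamics $\dot x^\alpha(t)=(1-\alpha)f(t,x^\alpha(t),\bar u(t))+\alpha f(t,x^\alpha(t),u(t))$, $x^\alpha(0)=x_0$, and relaxed cost $J^\alpha=\int_0^T[(1-\alpha)f^0(t,x^\alpha(t),\bar u(t))+\alpha f^0(t,x^\alpha(t),u(t))]\,dt$. Then $J(\bar u)\le J^\alpha$ for every $\alpha\in[0,1]$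 and every measurable $u$. -/
/-!
The relaxed control `(1 - α) ū + α u` is approximated by chattering controls `w_k`, which use `u`
on `{s | fract (k s) < α}` and `ū` elsewhere. The difference between the two dynamics (and costs)
is `ψ(k s) • g(s)` with `ψ = 𝟙{fract < α} - α` one-periodic of mean zero, so its primitive tends
to zero uniformly on `[0, T]` for every integrable `g`: this is immediate for uniformly continuous
`g`, since every period contributes almost nothing, and follows for all `g` by `L¹` density.
Hence the relaxed trajectory solves the ODE of `w_k` up to a uniformly small error; by Grönwall
the trajectories of `w_k` (which exist by Picard iteration) converge uniformly to it, so their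
costs converge to the relaxed cost. Optimality of `ū` among ordinary controls concludes.
-/

open MeasureTheory Set Function Real Topology Filter
open scoped Interval

theorem MeasureTheory.IntegrableOn.intervalIntegrable_of_mem_Icc {E : Type*} [NormedAddCommGroup E]
    {f : ℝ → E} {a b t : ℝ} (hf : IntegrableOn f (Icc a b)) (ht : t ∈ Icc a b) :
    IntervalIntegrable f volume a t :=
  (hf.mono_set (by rw [uIcc_of_le ht.1]; exact Icc_subset_Icc_right ht.2)).intervalIntegrable

theorem MeasureTheory.IntegrableOn.continuousOn_primitive {E : Type*} [NormedAddCommGroup E]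
    [NormedSpace ℝ E] {f : ℝ → E} {a b : ℝ} (hf : IntegrableOn f (Icc a b)) :
    ContinuousOn (fun t => ∫ s in a..t, f s) (Icc a b) := by
  rcases le_or_gt a b with hab | hab
  · have := intervalIntegral.continuousOn_primitive_interval (a := a) (b := b) (μ := volume)
      (by rwa [uIcc_of_le hab])
    rwa [uIcc_of_le hab] at this
  · simp [Icc_eq_empty_of_lt hab]

theorem le_mul_exp_of_le_add_integral {e : ℝ → ℝ} {ε L T : ℝ} (hL : 0 ≤ L)
    (he : ContinuousOn e (Icc 0 T)) (h : ∀ t ∈ Icc 0 T, e t ≤ ε + L * ∫ s in 0..t, e s) :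
    ∀ t ∈ Icc 0 T, e t ≤ ε * exp (L * t) := by
  have hprim := he.integrableOn_Icc (μ := volume).continuousOn_primitive
  have hderiv : ∀ x ∈ Ico 0 T, HasDerivWithinAt (fun t => ∫ s in 0..t, e s) (e x) (Ici x) x := by
    intro x hx
    have hIcc : Icc 0 T ∈ 𝓝[>] x := Icc_mem_nhdsGT_of_mem ⟨hx.1, hx.2⟩
    exact intervalIntegral.integral_hasDerivWithinAt_right
      ((he.mono (Icc_subset_Icc_right hx.2.le)).intervalIntegrable_of_Icc hx.1)
      ((he.stronglyMeasurableAtFilter_nhdsWithin measurableSet_Icc x).filter_mono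
        (nhdsWithin_le_of_mem hIcc))
      ((he x (Ico_subset_Icc_self hx)).mono_of_mem_nhdsWithin hIcc)
  have hgron := le_gronwallBound_of_liminf_deriv_right_le (δ := 0) (K := L) (ε := ε) hprim
    (fun x hx _ hr => (hderiv x hx).liminf_right_slope_le hr) (by simp)
    (fun x hx => by linarith [h x (Ico_subset_Icc_self hx)])
  intro t ht
  have key : ε + L * gronwallBound 0 L ε t = ε * exp (L * t) := by
    rcases eq_or_ne L 0 with rfl | hL0
    · simp [gronwallBound_K0]
    · rw [gronwallBound_of_K_ne_0 hL0]; field_simp; ring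
  calc e t ≤ ε + L * ∫ s in 0..t, e s := h t ht
    _ ≤ ε + L * gronwallBound 0 L ε t := by
      gcongr; simpa using hgron t ht
    _ = ε * exp (L * t) := key

theorem continuousOn_IccExtend {E : Type*} [TopologicalSpace E] {a b : ℝ} (hab : a ≤ b)
    (y : C(Icc a b, E)) : ContinuousOn (IccExtend hab y) (Icc a b) :=
  (continuous_IccExtend_iff.2 y.continuous).continuousOn

section IntegralEquation

open scoped Nat

variable {E : Type*} [NormedAddCommGroup E] {L T : ℝ}

theorem norm_integral_sub_integral_le {G : Type*} [NormedAddCommGroup G] [NormedSpace ℝ G]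
    {F : ℝ → E → G} (hFlip : ∀ s x x', ‖F s x - F s x'‖ ≤ L * ‖x - x'‖)
    (hF : ∀ y, ContinuousOn y (Icc 0 T) → IntegrableOn (fun s => F s (y s)) (Icc 0 T))
    {y z : ℝ → E} (hy : ContinuousOn y (Icc 0 T)) (hz : ContinuousOn z (Icc 0 T))
    {t : ℝ} (ht : t ∈ Icc 0 T) :
    ‖(∫ s in 0..t, F s (y s)) - ∫ s in 0..t, F s (z s)‖ ≤ L * ∫ s in 0..t, ‖y s - z s‖ := by
  rw [← intervalIntegral.integral_sub ((hF y hy).intervalIntegrable_of_mem_Icc ht)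
    ((hF z hz).intervalIntegrable_of_mem_Icc ht), ← intervalIntegral.integral_const_mul]
  refine (intervalIntegral.norm_integral_le_integral_norm ht.1).trans
    (intervalIntegral.integral_mono_on ht.1 ?_ ?_ fun s _ => hFlip s (y s) (z s))
  · exact IntegrableOn.intervalIntegrable_of_mem_Icc ((hF y hy).sub (hF z hz)).norm ht
  · exact (((hy.sub hz).norm.const_smul L).mono
      (Icc_subset_Icc_right ht.2)).intervalIntegrable_of_Icc ht.1

variable [NormedSpace ℝ E] {F : ℝ → E → E}

theorem norm_sub_le_of_approx_solution (hL : 0 ≤ L)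
    (hFlip : ∀ s x x', ‖F s x - F s x'‖ ≤ L * ‖x - x'‖)
    (hF : ∀ y, ContinuousOn y (Icc 0 T) → IntegrableOn (fun s => F s (y s)) (Icc 0 T))
    {x0 : E} {x z : ℝ → E} (hx : ContinuousOn x (Icc 0 T))
    (hxsol : ∀ t ∈ Icc 0 T, x t = x0 + ∫ s in 0..t, F s (x s))
    (hz : ContinuousOn z (Icc 0 T)) {ε : ℝ}
    (hzε : ∀ t ∈ Icc 0 T, ‖x0 + (∫ s in 0..t, F s (z s)) - z t‖ ≤ ε) :
    ∀ t ∈ Icc 0 T, ‖x t - z t‖ ≤ ε * exp (L * t) := by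
  refine le_mul_exp_of_le_add_integral hL (hx.sub hz).norm fun t ht => ?_
  calc ‖x t - z t‖ = ‖((∫ s in 0..t, F s (x s)) - ∫ s in 0..t, F s (z s)) +
        (x0 + (∫ s in 0..t, F s (z s)) - z t)‖ := by rw [hxsol t ht]; abel_nf
    _ ≤ L * (∫ s in 0..t, ‖x s - z s‖) + ε :=
        (norm_add_le _ _).trans (add_le_add (norm_integral_sub_integral_le hFlip hF hx hz ht)
          (hzε t ht))
    _ = ε + L * ∫ s in 0..t, ‖x s - z s‖ := add_comm _ _

noncomputable def picardMap (hT : 0 ≤ T)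
    (hF : ∀ y, ContinuousOn y (Icc 0 T) → IntegrableOn (fun s => F s (y s)) (Icc 0 T)) (x0 : E)
    (y : C(Icc 0 T, E)) : C(Icc 0 T, E) where
  toFun t := x0 + ∫ s in 0..t, F s (IccExtend hT y s)
  continuous_toFun := by
    have hprim := (hF _ (continuousOn_IccExtend hT y)).continuousOn_primitive
    exact continuousOn_iff_continuous_domRestrict.1 (continuousOn_const.add hprim)

section Iterate

variable (hT : 0 ≤ T)
  (hF : ∀ y, ContinuousOn y (Icc 0 T) → IntegrableOn (fun s => F s (y s)) (Icc 0 T)) (x0 : E)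

theorem picardMap_apply (y : C(Icc 0 T, E)) (t : Icc 0 T) :
    picardMap hT hF x0 y t = x0 + ∫ s in 0..t, F s (IccExtend hT y s) := rfl

theorem norm_iterate_picardMap_sub_le (hL : 0 ≤ L)
    (hFlip : ∀ s x x', ‖F s x - F s x'‖ ≤ L * ‖x - x'‖) (k : ℕ) (y z : C(Icc 0 T, E))
    (t : Icc 0 T) :
    ‖(picardMap hT hF x0)^[k] y t - (picardMap hT hF x0)^[k] z t‖ ≤
      (L * t) ^ k / k ! * dist y z := by
  induction k generalizing t with
  | zero => simpa [← dist_eq_norm] using ContinuousMap.dist_apply_le_dist (f := y) (g := z) t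
  | succ k ih =>
    set Y := (picardMap hT hF x0)^[k] y
    set Z := (picardMap hT hF x0)^[k] z
    have hbound : ∀ s ∈ Icc 0 (t : ℝ),
        ‖IccExtend hT Y s - IccExtend hT Z s‖ ≤ (L * s) ^ k / k ! * dist y z := by
      intro s hs
      have hsT : s ∈ Icc 0 T := ⟨hs.1, hs.2.trans t.2.2⟩
      rw [IccExtend_of_mem hT Y hsT, IccExtend_of_mem hT Z hsT]
      exact ih ⟨s, hsT⟩
    rw [iterate_succ_apply', iterate_succ_apply', picardMap_apply, picardMap_apply,
      add_sub_add_left_eq_sub]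
    calc _ ≤ L * ∫ s in 0..(t : ℝ), ‖IccExtend hT Y s - IccExtend hT Z s‖ :=
          norm_integral_sub_integral_le hFlip hF (continuousOn_IccExtend hT Y)
            (continuousOn_IccExtend hT Z) t.2
      _ ≤ L * ∫ s in 0..(t : ℝ), (L * s) ^ k / k ! * dist y z := by
          refine mul_le_mul_of_nonneg_left
            (intervalIntegral.integral_mono_on t.2.1 ?_
              (Continuous.intervalIntegrable (by fun_prop) _ _) hbound) hL
          exact (((continuousOn_IccExtend hT Y).sub (continuousOn_IccExtend hT Z)).norm.mono
            (Icc_subset_Icc_right t.2.2)).intervalIntegrable_of_Icc t.2.1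
      _ = (L * t) ^ (k + 1) / (k + 1) ! * dist y z := by
          have hfun : (fun s : ℝ => (L * s) ^ k / k ! * dist y z) =
              fun s => (L ^ k / k ! * dist y z) * s ^ k := by
            ext s; ring
          rw [hfun, intervalIntegral.integral_const_mul, integral_pow, Nat.factorial_succ]
          push_cast
          field_simp
          ring

end Iterate

theorem exists_integral_solution [CompleteSpace E] (hT : 0 ≤ T)
    (hF : ∀ y, ContinuousOn y (Icc 0 T) → IntegrableOn (fun s => F s (y s)) (Icc 0 T)) (x0 : E)
    (hL : 0 ≤ L) (hFlip : ∀ s x x', ‖F s x - F s x'‖ ≤ L * ‖x - x'‖) :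
    ∃ x : ℝ → E, ContinuousOn x (Icc 0 T) ∧ ∀ t ∈ Icc 0 T, x t = x0 + ∫ s in 0..t, F s (x s) := by
  set P := picardMap hT hF x0
  -- `(L T)^m / m! < 1` for large `m`, so some iterate of the Picard map is a contraction.
  obtain ⟨m, hm⟩ := ((FloorSemiring.tendsto_pow_div_factorial_atTop (L * T)).eventually
    (gt_mem_nhds one_pos)).exists
  have hq : 0 ≤ (L * T) ^ m / m ! := by have := mul_nonneg hL hT; positivity
  have hdist : ∀ y z, dist (P^[m] y) (P^[m] z) ≤ (L * T) ^ m / m ! * dist y z := by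
    intro y z
    refine (ContinuousMap.dist_le (by positivity)).2 fun t => ?_
    rw [dist_eq_norm]
    refine (norm_iterate_picardMap_sub_le hT hF x0 hL hFlip m y z t).trans ?_
    gcongr
    exacts [mul_nonneg hL t.2.1, t.2.2]
  have hcontr : ContractingWith ⟨(L * T) ^ m / m !, hq⟩ P^[m] :=
    ⟨hm, LipschitzWith.of_dist_le_mul hdist⟩
  have : Nonempty C(Icc 0 T, E) := ⟨.const _ x0⟩
  obtain ⟨xs, hfix⟩ : ∃ xs, P xs = xs := ⟨_, hcontr.isFixedPt_fixedPoint_iterate⟩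
  refine ⟨IccExtend hT xs, continuousOn_IccExtend hT xs, fun t ht => ?_⟩
  rw [IccExtend_of_mem hT _ ht]
  exact (DFunLike.congr_fun hfix ⟨t, ht⟩).symm

end IntegralEquation

structure CaratheodoryLipschitz {E U G : Type*} [NormedAddCommGroup E] [TopologicalSpace U]
    [NormedAddCommGroup G] [MeasurableSpace G] (g : ℝ → E → U → G) (L : ℝ) : Prop where
  measurable : ∀ x u, Measurable (g · x u)
  continuous : ∀ t, Continuous (fun p : E × U => g t p.1 p.2)
  lipschitz : ∀ t x x' u, ‖g t x u - g t x' u‖ ≤ L * ‖x - x'‖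
  norm_zero_le : ∀ t u, ‖g t 0 u‖ ≤ L

namespace CaratheodoryLipschitz

variable {E U G : Type*} [NormedAddCommGroup E] [TopologicalSpace U]
  [NormedAddCommGroup G] [MeasurableSpace G] {g : ℝ → E → U → G} {L : ℝ}

theorem nonneg (hg : CaratheodoryLipschitz g L) (u : U) : 0 ≤ L :=
  (norm_nonneg _).trans (hg.norm_zero_le 0 u)

theorem norm_le (hg : CaratheodoryLipschitz g L) (t : ℝ) (x : E) (u : U) :
    ‖g t x u‖ ≤ L + L * ‖x‖ := by
  have := hg.lipschitz t x 0 u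
  rw [sub_zero] at this
  linarith [norm_le_insert' (g t x u) (g t 0 u), hg.norm_zero_le t u]

variable [MeasurableSpace E] [BorelSpace E] [SecondCountableTopology E]
  [TopologicalSpace.MetrizableSpace U] [SecondCountableTopology U] [MeasurableSpace U]
  [BorelSpace U] [SecondCountableTopology G] [BorelSpace G]

theorem stronglyMeasurable_comp (hg : CaratheodoryLipschitz g L) {y : ℝ → E} (hy : Measurable y)
    {v : ℝ → U} (hv : Measurable v) : StronglyMeasurable (fun s => g s (y s) (v s)) := by
  have hunc : StronglyMeasurable (uncurry fun (p : E × U) (t : ℝ) => g t p.1 p.2) :=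
    stronglyMeasurable_uncurry_of_continuous_of_stronglyMeasurable hg.continuous
      fun p => (hg.measurable p.1 p.2).stronglyMeasurable
  exact hunc.comp_measurable ((hy.prodMk hv).prodMk measurable_id)

theorem integrableOn_comp (hg : CaratheodoryLipschitz g L) {a b : ℝ} {y : ℝ → E}
    (hy : ContinuousOn y (Icc a b)) {v : ℝ → U} (hv : Measurable v) :
    IntegrableOn (fun s => g s (y s) (v s)) (Icc a b) := by
  have hL := hg.nonneg (v 0)
  have hy' := hy.aemeasurable (μ := volume) measurableSet_Icc
  obtain ⟨M, hM⟩ := isCompact_Icc.exists_bound_of_continuousOn hy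
  have hmeas : AEStronglyMeasurable (fun s => g s (y s) (v s)) (volume.restrict (Icc a b)) :=
    (hg.stronglyMeasurable_comp hy'.measurable_mk hv).aestronglyMeasurable.congr
      (hy'.ae_eq_mk.mono fun s hs => by simp only [hs])
  refine Integrable.mono' (integrableOn_const (C := L + L * M) measure_Icc_lt_top.ne) hmeas ?_
  rw [ae_restrict_iff' measurableSet_Icc]
  refine .of_forall fun s hs => (hg.norm_le s (y s) (v s)).trans ?_
  gcongr
  exact hM s hs

theorem integral_le_integral_add_of_norm_sub_le {g : ℝ → E → U → ℝ} {T : ℝ}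
    (hg : CaratheodoryLipschitz g L) (hT : 0 ≤ T) {w : ℝ → U} (hw : Measurable w) {x z : ℝ → E}
    (hx : ContinuousOn x (Icc 0 T)) (hz : ContinuousOn z (Icc 0 T)) {ε : ℝ}
    (hxz : ∀ t ∈ Icc 0 T, ‖x t - z t‖ ≤ ε) :
    ∫ t in 0..T, g t (x t) (w t) ≤ (∫ t in 0..T, g t (z t) (w t)) + L * (T * ε) := by
  have hdist := norm_integral_sub_integral_le (F := fun s y => g s y (w s))
    (fun s x x' => hg.lipschitz s x x' _) (fun y hy => hg.integrableOn_comp hy hw) hx hz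
    (right_mem_Icc.2 hT)
  have hint : ∫ s in 0..T, ‖x s - z s‖ ≤ T * ε := by
    refine (intervalIntegral.integral_mono_on hT ?_ intervalIntegrable_const hxz).trans_eq ?_
    · exact (hx.sub hz).norm.intervalIntegrable_of_Icc hT
    · rw [intervalIntegral.integral_const, sub_zero, smul_eq_mul]
  rw [Real.norm_eq_abs, abs_le] at hdist
  linarith [mul_le_mul_of_nonneg_left hint (hg.nonneg (w 0))]

end CaratheodoryLipschitz

section Oscillation

variable {F : Type*} [NormedAddCommGroup F] [NormedSpace ℝ F] {ψ : ℝ → ℝ} {C : ℝ}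

theorem integral_comp_mul_add_inv_eq_zero (hψp : Periodic ψ 1) (hψ0 : ∫ s in 0..1, ψ s = 0)
    {c : ℝ} (hc : c ≠ 0) (a : ℝ) : ∫ s in a..a + c⁻¹, ψ (c * s) = 0 := by
  rw [intervalIntegral.integral_comp_mul_left ψ hc, mul_add, mul_inv_cancel₀ hc,
    hψp.intervalIntegral_add_eq (c * a) 0, zero_add, hψ0, smul_zero]

theorem integrableOn_comp_mul_smul (hψm : Measurable ψ) (hψC : ∀ s, |ψ s| ≤ C) (c : ℝ)
    {g : ℝ → F} {S : Set ℝ} (hg : IntegrableOn g S) :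
    IntegrableOn (fun s => ψ (c * s) • g s) S :=
  hg.bdd_smul C (hψm.comp (measurable_const_mul c)).aestronglyMeasurable
    (.of_forall fun s => hψC (c * s))

theorem intervalIntegrable_comp_mul_smul (hψm : Measurable ψ) (hψC : ∀ s, |ψ s| ≤ C) (c : ℝ)
    {g : ℝ → F} {a b : ℝ} (hg : IntervalIntegrable g volume a b) :
    IntervalIntegrable (fun s => ψ (c * s) • g s) volume a b := by
  rw [intervalIntegrable_iff] at hg ⊢
  exact integrableOn_comp_mul_smul hψm hψC c hg

variable [CompleteSpace F]

theorem norm_integral_comp_mul_smul_period_le (hψp : Periodic ψ 1) (hψ0 : ∫ s in 0..1, ψ s = 0)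
    (hψm : Measurable ψ) (hψC : ∀ s, |ψ s| ≤ C) {φ : ℝ → F} (hφ : Continuous φ) {c ω : ℝ}
    (hc : 0 < c) (a : ℝ) (hω : ∀ s ∈ Icc a (a + c⁻¹), ‖φ s - φ a‖ ≤ ω) :
    ‖∫ s in a..a + c⁻¹, ψ (c * s) • φ s‖ ≤ C * ω * c⁻¹ := by
  have hsplit : ∫ s in a..a + c⁻¹, ψ (c * s) • φ s =
      (∫ s in a..a + c⁻¹, ψ (c * s) • (φ s - φ a)) + (∫ s in a..a + c⁻¹, ψ (c * s)) • φ a := by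
    rw [← intervalIntegral.integral_smul_const, ← intervalIntegral.integral_add]
    · simp_rw [smul_sub, sub_add_cancel]
    · exact intervalIntegrable_comp_mul_smul hψm hψC c
        ((hφ.sub continuous_const).intervalIntegrable _ _)
    · exact intervalIntegrable_comp_mul_smul hψm hψC c (g := fun _ => φ a) intervalIntegrable_const
  have hle : a ≤ a + c⁻¹ := le_add_of_nonneg_right (inv_nonneg.2 hc.le)
  rw [hsplit, integral_comp_mul_add_inv_eq_zero hψp hψ0 hc.ne', zero_smul, add_zero]
  refine (intervalIntegral.norm_integral_le_of_norm_le_const fun s hs => ?_).trans_eq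
    (by rw [add_sub_cancel_left, abs_of_nonneg (inv_nonneg.2 hc.le)])
  rw [uIoc_of_le hle] at hs
  rw [norm_smul, Real.norm_eq_abs]
  exact mul_le_mul (hψC _) (hω s (Ioc_subset_Icc_self hs)) (norm_nonneg _)
    ((abs_nonneg _).trans (hψC 0))

theorem norm_integral_comp_mul_smul_le (hψp : Periodic ψ 1) (hψ0 : ∫ s in 0..1, ψ s = 0)
    (hψm : Measurable ψ) (hψC : ∀ s, |ψ s| ≤ C) {φ : ℝ → F} (hφ : Continuous φ) {M ω c t : ℝ}
    (hc : 0 < c) (ht : 0 ≤ t) (hM : ∀ s, ‖φ s‖ ≤ M)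
    (hω : ∀ s s', |s - s'| ≤ c⁻¹ → ‖φ s - φ s'‖ ≤ ω) :
    ‖∫ s in 0..t, ψ (c * s) • φ s‖ ≤ C * (t * ω + M * c⁻¹) := by
  have hC : 0 ≤ C := (abs_nonneg _).trans (hψC 0)
  have hint : ∀ a b, IntervalIntegrable (fun s => ψ (c * s) • φ s) volume a b :=
    fun a b => intervalIntegrable_comp_mul_smul hψm hψC c (hφ.intervalIntegrable a b)
  -- `[0, t]` is `N` full periods, on each of which `ψ (c * ·)` has mean zero, plus a remainder.
  set N := ⌊c * t⌋₊
  have hNt : N * c⁻¹ ≤ t := by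
    rw [← div_eq_mul_inv, div_le_iff₀ hc, mul_comm]; exact Nat.floor_le (by positivity)
  have htN : t - N * c⁻¹ ≤ c⁻¹ := by
    have := Nat.lt_floor_add_one (c * t)
    rw [sub_le_iff_le_add, ← one_add_mul, ← div_eq_mul_inv, le_div_iff₀ hc, mul_comm, add_comm]
    exact this.le
  have hperiods : ‖∫ s in 0..N * c⁻¹, ψ (c * s) • φ s‖ ≤ C * (t * ω) := by
    have hsum := intervalIntegral.sum_integral_adjacent_intervals (a := fun i : ℕ => i * c⁻¹)
      (n := N) fun i _ => hint _ _
    simp only [Nat.cast_zero, zero_mul] at hsum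
    rw [← hsum]
    refine (norm_sum_le _ _).trans ?_
    calc ∑ i ∈ Finset.range N, ‖∫ s in i * c⁻¹..(i + 1 : ℕ) * c⁻¹, ψ (c * s) • φ s‖
        ≤ ∑ i ∈ Finset.range N, C * ω * c⁻¹ := by
          refine Finset.sum_le_sum fun i _ => ?_
          rw [Nat.cast_succ, add_one_mul]
          refine norm_integral_comp_mul_smul_period_le hψp hψ0 hψm hψC hφ hc _ fun s hs => ?_
          exact hω _ _ (by rw [abs_of_nonneg (by linarith [hs.1])]; linarith [hs.2])
      _ = C * ((N * c⁻¹) * ω) := by rw [Finset.sum_const, Finset.card_range, nsmul_eq_mul]; ring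
      _ ≤ C * (t * ω) := by
          have hω0 : 0 ≤ ω := (norm_nonneg _).trans (hω 0 0 (by simp [hc.le]))
          gcongr
  have hrest : ‖∫ s in N * c⁻¹..t, ψ (c * s) • φ s‖ ≤ C * (M * c⁻¹) := by
    refine (intervalIntegral.norm_integral_le_of_norm_le_const (C := C * M) fun s _ => ?_).trans ?_
    · rw [norm_smul, Real.norm_eq_abs]
      exact mul_le_mul (hψC _) (hM s) (norm_nonneg _) hC
    · have hM0 : 0 ≤ M := (norm_nonneg _).trans (hM 0)
      rw [abs_of_nonneg (sub_nonneg.2 hNt), mul_assoc]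
      gcongr
  rw [← intervalIntegral.integral_add_adjacent_intervals (hint 0 (N * c⁻¹)) (hint _ t), mul_add]
  exact (norm_add_le _ _).trans (add_le_add hperiods hrest)

theorem tendstoUniformlyOn_integral_comp_mul_smul_of_hasCompactSupport (hψp : Periodic ψ 1)
    (hψ0 : ∫ s in 0..1, ψ s = 0) (hψm : Measurable ψ) (hψC : ∀ s, |ψ s| ≤ C) {φ : ℝ → F}
    (hφ : Continuous φ) (hφs : HasCompactSupport φ) (T : ℝ) :
    TendstoUniformlyOn (fun (k : ℕ) t => ∫ s in 0..t, ψ (k * s) • φ s) 0 atTop (Icc 0 T) := by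
  have hC : 0 ≤ C := (abs_nonneg _).trans (hψC 0)
  obtain ⟨M, hM⟩ := hφs.exists_bound_of_continuous hφ
  rw [Metric.tendstoUniformlyOn_iff]
  intro ε hε
  set ω := ε / (2 * (C * |T| + 1))
  have hCT : 0 < C * |T| + 1 := by positivity
  obtain ⟨δ, hδ, hδω⟩ := Metric.uniformContinuous_iff.1
    (hφs.uniformContinuous_of_continuous hφ) ω (by positivity)
  have hinv : Tendsto (fun k : ℕ => (k : ℝ)⁻¹) atTop (𝓝 0) := tendsto_inv_atTop_nhds_zero_nat
  filter_upwards [eventually_gt_atTop 0, hinv.eventually_lt_const hδ,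
    (hinv.const_mul (C * M)).eventually_lt_const (by rw [mul_zero]; exact half_pos hε)]
    with k hk0 hkδ hkM t ht
  rw [Pi.zero_apply, dist_zero_left]
  have hCtω : C * (t * ω) ≤ ε / 2 := by
    calc C * (t * ω) ≤ (C * |T| + 1) * ω := by
          have : C * t ≤ C * |T| := mul_le_mul_of_nonneg_left (ht.2.trans (le_abs_self T)) hC
          nlinarith [show 0 ≤ ω by positivity]
      _ = ε / 2 := by simp only [ω]; field_simp
  calc ‖∫ s in 0..t, ψ (k * s) • φ s‖ ≤ C * (t * ω + M * (k : ℝ)⁻¹) :=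
        norm_integral_comp_mul_smul_le hψp hψ0 hψm hψC hφ (Nat.cast_pos.2 hk0) ht.1 hM
          fun s s' hss' => by
            simpa [dist_eq_norm] using (hδω (a := s) (b := s')
              (by rw [Real.dist_eq]; exact hss'.trans_lt hkδ)).le
    _ < ε := by linarith

theorem tendstoUniformlyOn_integral_comp_mul_smul (hψp : Periodic ψ 1)
    (hψ0 : ∫ s in 0..1, ψ s = 0) (hψm : Measurable ψ) (hψC : ∀ s, |ψ s| ≤ C) {g : ℝ → F} {T : ℝ}
    (hg : IntegrableOn g (Icc 0 T)) :
    TendstoUniformlyOn (fun (k : ℕ) t => ∫ s in 0..t, ψ (k * s) • g s) 0 atTop (Icc 0 T) := by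
  have hC : 0 ≤ C := (abs_nonneg _).trans (hψC 0)
  rw [Metric.tendstoUniformlyOn_iff]
  intro ε hε
  obtain ⟨φ, hφs, hφg, hφ, -⟩ :=
    hg.exists_hasCompactSupport_integral_sub_le (show 0 < ε / (2 * (C + 1)) by positivity)
  have hφk := tendstoUniformlyOn_integral_comp_mul_smul_of_hasCompactSupport hψp hψ0 hψm hψC hφ
    hφs T
  filter_upwards [Metric.tendstoUniformlyOn_iff.1 hφk (ε / 2) (half_pos hε)] with k hk t ht
  specialize hk t ht
  rw [Pi.zero_apply, dist_zero_left] at hk ⊢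
  have hsub : IntegrableOn (fun s => g s - φ s) (Icc 0 T) := hg.sub hφ.integrableOn_Icc
  have hdiff : ‖∫ s in 0..t, ψ (k * s) • (g s - φ s)‖ ≤ C * (ε / (2 * (C + 1))) := by
    calc ‖∫ s in 0..t, ψ (k * s) • (g s - φ s)‖ ≤ ∫ s in Ι 0 t, ‖ψ (k * s) • (g s - φ s)‖ :=
          intervalIntegral.norm_integral_le_integral_norm_uIoc
      _ ≤ ∫ s in Icc 0 T, ‖ψ (k * s) • (g s - φ s)‖ :=
          setIntegral_mono_set (integrableOn_comp_mul_smul hψm hψC _ hsub).norm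
            (.of_forall fun _ => norm_nonneg _) (uIoc_of_le ht.1 ▸ Ioc_subset_Icc_self.trans
              (Icc_subset_Icc_right ht.2)).eventuallyLE
      _ ≤ ∫ s in Icc 0 T, C * ‖g s - φ s‖ := by
          refine setIntegral_mono (integrableOn_comp_mul_smul hψm hψC _ hsub).norm
            (hsub.norm.const_mul C) fun s => ?_
          rw [norm_smul, Real.norm_eq_abs]
          exact mul_le_mul_of_nonneg_right (hψC _) (norm_nonneg _)
      _ ≤ C * (ε / (2 * (C + 1))) := by
          rw [integral_const_mul]; exact mul_le_mul_of_nonneg_left hφg hC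
  have hsplit : ∫ s in 0..t, ψ (k * s) • g s =
      (∫ s in 0..t, ψ (k * s) • (g s - φ s)) + ∫ s in 0..t, ψ (k * s) • φ s := by
    rw [← intervalIntegral.integral_add]
    · simp_rw [smul_sub, sub_add_cancel]
    · exact intervalIntegrable_comp_mul_smul hψm hψC _ (hsub.intervalIntegrable_of_mem_Icc ht)
    · exact intervalIntegrable_comp_mul_smul hψm hψC _ (hφ.intervalIntegrable _ _)
  rw [hsplit]
  calc _ ≤ ‖∫ s in 0..t, ψ (k * s) • (g s - φ s)‖ + ‖∫ s in 0..t, ψ (k * s) • φ s‖ :=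
        norm_add_le _ _
    _ < C * (ε / (2 * (C + 1))) + ε / 2 := add_lt_add_of_le_of_lt hdiff hk
    _ ≤ ε := by
        have : C * (ε / (2 * (C + 1))) ≤ ε / 2 := by
          rw [mul_div_assoc']; rw [div_le_div_iff₀ (by positivity) two_pos]; nlinarith
        linarith

end Oscillation

section Chattering

variable {U : Type*} {α : ℝ}

noncomputable def chatteringOscillation (α s : ℝ) : ℝ :=
  (if Int.fract s < α then 1 else 0) - α

noncomputable def chatteringControl (α : ℝ) (k : ℕ) (u v : ℝ → U) (s : ℝ) : U :=
  if Int.fract (k * s) < α then v s else u s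

theorem measurable_chatteringOscillation : Measurable (chatteringOscillation α) :=
  (Measurable.ite (measurableSet_lt measurable_fract measurable_const) measurable_const
    measurable_const).sub_const α

theorem periodic_chatteringOscillation : Periodic (chatteringOscillation α) 1 := by
  intro s
  simp only [chatteringOscillation, Int.fract_add_one]

theorem abs_chatteringOscillation_le (hα : α ∈ Icc 0 1) (s : ℝ) :
    |chatteringOscillation α s| ≤ 1 := by
  rw [abs_le]
  unfold chatteringOscillation
  split_ifs <;> constructor <;> linarith [hα.1, hα.2]

theorem integral_chatteringOscillation (hα : α ∈ Icc 0 1) :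
    ∫ s in 0..1, chatteringOscillation α s = 0 := by
  have hind : ∫ s in (0 : ℝ)..1, (if Int.fract s < α then (1 : ℝ) else 0) = α := by
    rw [intervalIntegral.integral_of_le zero_le_one, integral_Ioc_eq_integral_Ioo,
      setIntegral_congr_fun measurableSet_Ioo (g := (Iio α).indicator 1) fun s hs => by
        simp [Int.fract_eq_self.2 ⟨hs.1.le, hs.2⟩, indicator_apply],
      integral_indicator_one measurableSet_Iio, measureReal_restrict_apply measurableSet_Iio,
      Iio_inter_Ioo, min_eq_left hα.2, Real.volume_real_Ioo_of_le hα.1, sub_zero]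
  unfold chatteringOscillation
  rw [intervalIntegral.integral_sub _ intervalIntegrable_const, hind]
  · simp
  · refine (intervalIntegrable_const (c := (1 : ℝ))).mono_fun
      (Measurable.ite (measurableSet_lt measurable_fract measurable_const) measurable_const
        measurable_const).aestronglyMeasurable (.of_forall fun s => ?_)
    dsimp only; split_ifs <;> simp

theorem measurable_chatteringControl [MeasurableSpace U] {u v : ℝ → U}
    (hu : Measurable u) (hv : Measurable v) (k : ℕ) : Measurable (chatteringControl α k u v) :=
  Measurable.ite (measurableSet_lt (measurable_fract.comp (measurable_const_mul _))
    measurable_const) hv hu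

theorem apply_chatteringControl {M : Type*} [AddCommGroup M] [Module ℝ M] (φ : U → M)
    (k : ℕ) (u v : ℝ → U) (s : ℝ) :
    φ (chatteringControl α k u v s) = ((1 - α) • φ (u s) + α • φ (v s)) +
      chatteringOscillation α (k * s) • (φ (v s) - φ (u s)) := by
  unfold chatteringControl chatteringOscillation
  split_ifs <;> module

theorem integral_comp_chatteringControl {G : Type*} [NormedAddCommGroup G] [NormedSpace ℝ G]
    {Φ : ℝ → U → G} {u v : ℝ → U} {T : ℝ}
    (hu : IntegrableOn (fun s => Φ s (u s)) (Icc 0 T))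
    (hv : IntegrableOn (fun s => Φ s (v s)) (Icc 0 T)) (hα : α ∈ Icc 0 1) (k : ℕ)
    {t : ℝ} (ht : t ∈ Icc 0 T) :
    ∫ s in 0..t, Φ s (chatteringControl α k u v s) =
      (∫ s in 0..t, ((1 - α) • Φ s (u s) + α • Φ s (v s))) +
        ∫ s in 0..t, chatteringOscillation α (k * s) • (Φ s (v s) - Φ s (u s)) := by
  simp_rw [apply_chatteringControl (Φ _)]
  refine intervalIntegral.integral_add ?_ ?_
  · exact IntegrableOn.intervalIntegrable_of_mem_Icc ((hu.smul (1 - α)).add (hv.smul α)) ht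
  · exact intervalIntegrable_comp_mul_smul measurable_chatteringOscillation
      (abs_chatteringOscillation_le hα) _
        (IntegrableOn.intervalIntegrable_of_mem_Icc (hv.sub hu) ht)

theorem tendstoUniformlyOn_integral_chatteringOscillation_smul {F : Type*}
    [NormedAddCommGroup F] [NormedSpace ℝ F] [CompleteSpace F] (hα : α ∈ Icc 0 1) {g : ℝ → F}
    {T : ℝ} (hg : IntegrableOn g (Icc 0 T)) :
    TendstoUniformlyOn (fun (k : ℕ) t => ∫ s in 0..t, chatteringOscillation α (k * s) • g s) 0
      atTop (Icc 0 T) :=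
  tendstoUniformlyOn_integral_comp_mul_smul periodic_chatteringOscillation
    (integral_chatteringOscillation hα) measurable_chatteringOscillation
    (abs_chatteringOscillation_le hα) hg

end Chattering

section Relaxation

variable {E U : Type*} [NormedAddCommGroup E] [NormedSpace ℝ E]
  [MeasurableSpace E] [BorelSpace E] [SecondCountableTopology E]
  [MetricSpace U] [SecondCountableTopology U] [MeasurableSpace U] [BorelSpace U]
  {f : ℝ → E → U → E} {f0 : ℝ → E → U → ℝ} {L T α : ℝ}

theorem norm_sub_le_of_chatteringControl (hT : 0 ≤ T) (hf : CaratheodoryLipschitz f L)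
    (hα : α ∈ Icc 0 1) {x0 : E} {u v : ℝ → U} (hu : Measurable u) (hv : Measurable v)
    {xα : ℝ → E} (hxαc : ContinuousOn xα (Icc 0 T))
    (hxα : ∀ t ∈ Icc 0 T,
      xα t = x0 + ∫ s in 0..t, ((1 - α) • f s (xα s) (u s) + α • f s (xα s) (v s)))
    {k : ℕ} {δ : ℝ} (hk : ∀ t ∈ Icc 0 T,
      ‖∫ s in 0..t, chatteringOscillation α (k * s) • (f s (xα s) (v s) - f s (xα s) (u s))‖ ≤ δ)
    {x : ℝ → E} (hxc : ContinuousOn x (Icc 0 T))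
    (hxsol : ∀ t ∈ Icc 0 T, x t = x0 + ∫ s in 0..t, f s (x s) (chatteringControl α k u v s)) :
    ∀ t ∈ Icc 0 T, ‖x t - xα t‖ ≤ δ * exp (L * T) := by
  have happrox : ∀ t ∈ Icc 0 T,
      ‖x0 + (∫ s in 0..t, f s (xα s) (chatteringControl α k u v s)) - xα t‖ ≤ δ := by
    intro t ht
    rw [integral_comp_chatteringControl (hf.integrableOn_comp hxαc hu)
      (hf.integrableOn_comp hxαc hv) hα k ht, hxα t ht, add_sub_add_left_eq_sub,
      add_sub_cancel_left]
    exact hk t ht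
  intro t ht
  refine (norm_sub_le_of_approx_solution (F := fun s y => f s y (chatteringControl α k u v s))
    (hf.nonneg (u 0)) (fun s x x' => hf.lipschitz s x x' _)
    (fun y hy => hf.integrableOn_comp hy (measurable_chatteringControl hu hv k)) hxc hxsol hxαc
    happrox t ht).trans ?_
  gcongr
  exacts [(norm_nonneg _).trans (hk 0 (left_mem_Icc.2 hT)), hf.nonneg (u 0), ht.2]

variable [CompleteSpace E]

theorem exists_control_cost_le_relaxed_cost_add (hT : 0 ≤ T)
    (hf : CaratheodoryLipschitz f L) (hf0 : CaratheodoryLipschitz f0 L) (hα : α ∈ Icc 0 1)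
    {x0 : E} {u v : ℝ → U} (hu : Measurable u) (hv : Measurable v) {xα : ℝ → E}
    (hxαc : ContinuousOn xα (Icc 0 T))
    (hxα : ∀ t ∈ Icc 0 T,
      xα t = x0 + ∫ s in 0..t, ((1 - α) • f s (xα s) (u s) + α • f s (xα s) (v s)))
    {η : ℝ} (hη : 0 < η) :
    ∃ w : ℝ → U, Measurable w ∧ ∃ x : ℝ → E, ContinuousOn x (Icc 0 T) ∧
      (∀ t ∈ Icc 0 T, x t = x0 + ∫ s in 0..t, f s (x s) (w s)) ∧
      ∫ t in 0..T, f0 t (x t) (w t) ≤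
        (∫ t in 0..T, ((1 - α) * f0 t (xα t) (u t) + α * f0 t (xα t) (v t))) + η := by
  have hLT : 0 ≤ L * T * exp (L * T) := by
    have := mul_nonneg (hf.nonneg (u 0)) hT; positivity
  set δ := η / (2 * (L * T * exp (L * T) + 1))
  have hδ : L * (T * (δ * exp (L * T))) ≤ η / 2 := by
    rw [show L * (T * (δ * exp (L * T))) =
        L * T * exp (L * T) * η / (2 * (L * T * exp (L * T) + 1)) by simp only [δ]; ring,
      div_le_div_iff₀ (by positivity) two_pos]
    nlinarith
  have hosc := tendstoUniformlyOn_integral_chatteringOscillation_smul hα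
    ((hf.integrableOn_comp hxαc hv).sub (hf.integrableOn_comp hxαc hu))
  have hosc0 := tendstoUniformlyOn_integral_chatteringOscillation_smul hα
    ((hf0.integrableOn_comp hxαc hv).sub (hf0.integrableOn_comp hxαc hu))
  obtain ⟨k, hk, hk0⟩ := ((Metric.tendstoUniformlyOn_iff.1 hosc δ (by positivity)).and
    (Metric.tendstoUniformlyOn_iff.1 hosc0 (η / 2) (half_pos hη))).exists
  have hw := measurable_chatteringControl (α := α) hu hv k
  obtain ⟨x, hxc, hxsol⟩ :=
    exists_integral_solution (F := fun s y => f s y (chatteringControl α k u v s)) hT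
      (fun y hy => hf.integrableOn_comp hy hw) x0 (hf.nonneg (u 0)) (hf.lipschitz · · · _)
  have hclose := norm_sub_le_of_chatteringControl hT hf hα hu hv hxαc hxα
    (fun t ht => by simpa using (hk t ht).le) hxc hxsol
  have hsplit := integral_comp_chatteringControl (Φ := fun s a => f0 s (xα s) a)
    (hf0.integrableOn_comp hxαc hu) (hf0.integrableOn_comp hxαc hv) hα k (right_mem_Icc.2 hT)
  have hosc_le := hk0 T (right_mem_Icc.2 hT)
  simp only [Pi.zero_apply, dist_zero_left, Real.norm_eq_abs, Pi.sub_apply, smul_eq_mul]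
    at hosc_le
  simp only [smul_eq_mul] at hsplit
  refine ⟨_, hw, x, hxc, hxsol, ?_⟩
  linarith [hf0.integral_le_integral_add_of_norm_sub_le hT hw hxc hxαc hclose,
    (abs_lt.1 hosc_le).2]

end Relaxation

theorem stmt_3_general {n : ℕ} {U : Type*} [MetricSpace U] [TopologicalSpace.SeparableSpace U]
    [MeasurableSpace U] [BorelSpace U]
    (T L : ℝ) (hT : 0 < T)
    (x0 : EuclideanSpace ℝ (Fin n))
    (f : ℝ → EuclideanSpace ℝ (Fin n) → U → EuclideanSpace ℝ (Fin n))
    (f0 : ℝ → EuclideanSpace ℝ (Fin n) → U → ℝ)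
    -- (S2)
    (hfm : ∀ x u, Measurable (fun t => f t x u))
    (hf0m : ∀ x u, Measurable (fun t => f0 t x u))
    (hfc : ∀ t, Continuous (fun p : EuclideanSpace ℝ (Fin n) × U => f t p.1 p.2))
    (hf0c : ∀ t, Continuous (fun p : EuclideanSpace ℝ (Fin n) × U => f0 t p.1 p.2))
    (hfLip : ∀ t x x' u, ‖f t x u - f t x' u‖ ≤ L * ‖x - x'‖)
    (hf0Lip : ∀ t x x' u, |f0 t x u - f0 t x' u| ≤ L * ‖x - x'‖)
    (hfbd : ∀ t u, ‖f t 0 u‖ ≤ L)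
    (hf0bd : ∀ t u, |f0 t 0 u| ≤ L)
    -- optimal pair
    (ubar : ℝ → U) (hubar : Measurable ubar)
    (xbar : ℝ → EuclideanSpace ℝ (Fin n))
    (hmin : ∀ (u : ℝ → U) (x : ℝ → EuclideanSpace ℝ (Fin n)), Measurable u →
      ContinuousOn x (Icc 0 T) →
      (∀ t ∈ Icc 0 T, x t = x0 + ∫ s in (0:ℝ)..t, f s (x s) (u s)) →
      (∫ t in (0:ℝ)..T, f0 t (xbar t) (ubar t)) ≤ ∫ t in (0:ℝ)..T, f0 t (x t) (u t)) :
    -- conclusion: relaxed cost is no smaller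
    ∀ α ∈ Icc (0:ℝ) 1, ∀ (u : ℝ → U), Measurable u →
      ∀ (xα : ℝ → EuclideanSpace ℝ (Fin n)), ContinuousOn xα (Icc 0 T) →
      (∀ t ∈ Icc 0 T, xα t = x0 + ∫ s in (0:ℝ)..t,
          ((1 - α) • f s (xα s) (ubar s) + α • f s (xα s) (u s))) →
      (∫ t in (0:ℝ)..T, f0 t (xbar t) (ubar t)) ≤
        ∫ t in (0:ℝ)..T, ((1 - α) * f0 t (xα t) (ubar t) + α * f0 t (xα t) (u t)) := by
  intro α hα u hu xα hxαc hxα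
  have hf : CaratheodoryLipschitz f L := ⟨hfm, hfc, hfLip, hfbd⟩
  have hf0 : CaratheodoryLipschitz f0 L := ⟨hf0m, hf0c, hf0Lip, hf0bd⟩
  refine le_of_forall_pos_le_add fun η hη => ?_
  obtain ⟨w, hw, x, hxc, hxsol, hcost⟩ :=
    exists_control_cost_le_relaxed_cost_add hT.le hf hf0 hα hubar hu hxαc hxα hη
  exact (hmin w x hw hxc hxsol).trans hcost

theorem stmt_3 {n : ℕ} {U : Type*} [MetricSpace U] [TopologicalSpace.SeparableSpace U]
    [MeasurableSpace U] [BorelSpace U]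
    (T L : ℝ) (hT : 0 < T) (hL : 0 < L)
    (x0 : EuclideanSpace ℝ (Fin n))
    (f : ℝ → EuclideanSpace ℝ (Fin n) → U → EuclideanSpace ℝ (Fin n))
    (f0 : ℝ → EuclideanSpace ℝ (Fin n) → U → ℝ)
    (fx : ℝ → EuclideanSpace ℝ (Fin n) → U → (EuclideanSpace ℝ (Fin n) →L[ℝ] EuclideanSpace ℝ (Fin n)))
    (f0x : ℝ → EuclideanSpace ℝ (Fin n) → U → EuclideanSpace ℝ (Fin n))
    -- (S2)
    (hfm : ∀ x u, Measurable (fun t => f t x u))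
    (hf0m : ∀ x u, Measurable (fun t => f0 t x u))
    (hfc : ∀ t, Continuous (fun p : EuclideanSpace ℝ (Fin n) × U => f t p.1 p.2))
    (hf0c : ∀ t, Continuous (fun p : EuclideanSpace ℝ (Fin n) × U => f0 t p.1 p.2))
    (hdf : ∀ t x u, HasFDerivAt (fun y => f t y u) (fx t x u) x)
    (hdf0 : ∀ t x u, HasGradientAt (fun y => f0 t y u) (f0x t x u) x)
    (hfLip : ∀ t x x' u, ‖f t x u - f t x' u‖ ≤ L * ‖x - x'‖)
    (hf0Lip : ∀ t x x' u, |f0 t x u - f0 t x' u| ≤ L * ‖x - x'‖)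
    (hfbd : ∀ t u, ‖f t 0 u‖ ≤ L)
    (hf0bd : ∀ t u, |f0 t 0 u| ≤ L)
    -- optimal pair
    (ubar : ℝ → U) (hubar : Measurable ubar)
    (xbar : ℝ → EuclideanSpace ℝ (Fin n)) (hxbarc : ContinuousOn xbar (Icc 0 T))
    (hxbar : ∀ t ∈ Icc 0 T, xbar t = x0 + ∫ s in (0:ℝ)..t, f s (xbar s) (ubar s))
    (hmin : ∀ (u : ℝ → U) (x : ℝ → EuclideanSpace ℝ (Fin n)), Measurable u →
      ContinuousOn x (Icc 0 T) →
      (∀ t ∈ Icc 0 T, x t = x0 + ∫ s in (0:ℝ)..t, f s (x s) (u s)) →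
      (∫ t in (0:ℝ)..T, f0 t (xbar t) (ubar t)) ≤ ∫ t in (0:ℝ)..T, f0 t (x t) (u t)) :
    -- conclusion: relaxed cost is no smaller
    ∀ α ∈ Icc (0:ℝ) 1, ∀ (u : ℝ → U), Measurable u →
      ∀ (xα : ℝ → EuclideanSpace ℝ (Fin n)), ContinuousOn xα (Icc 0 T) →
      (∀ t ∈ Icc 0 T, xα t = x0 + ∫ s in (0:ℝ)..t,
          ((1 - α) • f s (xα s) (ubar s) + α • f s (xα s) (u s))) →
      (∫ t in (0:ℝ)..T, f0 t (xbar t) (ubar t)) ≤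
        ∫ t in (0:ℝ)..T, ((1 - α) * f0 t (xα t) (ubar t) + α * f0 t (xα t) (u t)) :=
  stmt_3_general T L hT x0 f f0 hfm hf0m hfc hf0c hfLip hf0Lip hfbd hf0bd ubar hubar xbar hmin
end

section
/- Let $W$ solve $\dot W+AW+WA^\top+Q=0$, $W(T)=0$, and $X$ solve $\dot X=A^\top X+b$, $X(0)=0$, with $A,Q,b$ bounded measurable and $Q(t)$ symmetric. Then $-\tfrac12\,\mathrm{tr}\int_0^T Q(t)X(t)X(t)^\top\,dt=-\int_0^T\langle W(t)b(t),X(t)\rangle\,dt$. -/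
/-!
Write `F = A W + W A† + Q`, so that `W' = -F` and `X' = A† X + b`. By the product rule,
`d/dt ⟪W X, X⟫ = ⟪-F X + W X', X⟫ + ⟪W X, X'⟫ = 2 ⟪W b, X⟫ - ⟪X, Q X⟫`: the terms in `A`
cancel, and `⟪W X, b⟫ = ⟪W b, X⟫` because `W` is self-adjoint. The left side integrates to zero
since `W T = 0` and `X 0 = 0`. Self-adjointness of `W` holds because `W - W†` solves the
homogeneous equation with zero terminal value, so it vanishes by Grönwall's inequality.
Finally `tr (Q x xᵀ) = ⟪x, Q x⟫`.

Since the coefficients are only measurable, `W` and `X` are given by integral equations, and the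
product rule for such functions is proved by Fubini's theorem on a triangle.
-/

open MeasureTheory Set ContinuousLinearMap
open scoped RealInnerProductSpace

section
variable {E F G : Type*} [NormedAddCommGroup E] [NormedSpace ℝ E]
  [NormedAddCommGroup F] [NormedSpace ℝ F] [NormedAddCommGroup G] [NormedSpace ℝ G]

theorem MeasureTheory.IntegrableOn.bilin_continuousOn (B : E →L[ℝ] F →L[ℝ] G) {K : Set ℝ}
    (hK : IsCompact K) {φ : ℝ → E} {g : ℝ → F} (hφ : IntegrableOn φ K) (hg : ContinuousOn g K) :
    IntegrableOn (fun t => B (φ t) (g t)) K := by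
  obtain ⟨C, hC⟩ := hK.exists_bound_of_continuousOn hg
  exact B.integrable_of_bilin_of_bdd_right C hφ
    (hg.aestronglyMeasurable hK.isClosed.measurableSet)
    (ae_restrict_of_forall_mem hK.isClosed.measurableSet hC)

theorem ContinuousOn.bilin_integrableOn (B : E →L[ℝ] F →L[ℝ] G) {K : Set ℝ} (hK : IsCompact K)
    {f : ℝ → E} {ψ : ℝ → F} (hf : ContinuousOn f K) (hψ : IntegrableOn ψ K) :
    IntegrableOn (fun t => B (f t) (ψ t)) K :=
  IntegrableOn.bilin_continuousOn B.flip hK hψ hf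

variable [CompleteSpace E] [CompleteSpace F] [CompleteSpace G]

theorem integral_bilin_primitive_add_integral_primitive_bilin (B : E →L[ℝ] F →L[ℝ] G)
    {a b : ℝ} (hab : a ≤ b) {φ : ℝ → E} {ψ : ℝ → F}
    (hφ : IntegrableOn φ (Ioc a b)) (hψ : IntegrableOn ψ (Ioc a b)) :
    (∫ s in a..b, B (φ s) (∫ u in a..s, ψ u)) + ∫ u in a..b, B (∫ s in a..u, φ s) (ψ u)
      = B (∫ s in a..b, φ s) (∫ u in a..b, ψ u) := by
  simp only [intervalIntegral.integral_of_le hab]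
  set μ := volume.restrict (Ioc a b)
  set K : ℝ × ℝ → G := fun p => B (φ p.1) (ψ p.2)
  have hK : Integrable K (μ.prod μ) := hφ.op_fst_snd (by fun_prop) ⟨‖B‖, B.le_opNorm₂⟩ hψ
  set S : Set (ℝ × ℝ) := {p | p.2 < p.1}
  have hS : MeasurableSet S := measurableSet_lt measurable_snd measurable_fst
  have below : ∫ p in S, K p ∂μ.prod μ = ∫ s in Ioc a b, B (φ s) (∫ u in a..s, ψ u) := by
    rw [← integral_indicator hS, integral_prod _ (hK.indicator hS)]
    refine setIntegral_congr_fun measurableSet_Ioc fun s hs => ?_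
    have : Iio s ∩ Ioc a b = Ioo a s := by
      ext u
      simp only [mem_inter_iff, mem_Iio, mem_Ioc, mem_Ioo]
      exact ⟨fun h => ⟨h.2.1, h.1⟩, fun h => ⟨h.2, h.1, h.2.le.trans hs.2⟩⟩
    calc ∫ u, S.indicator K (s, u) ∂μ
        = ∫ u, (Iio s).indicator (fun u => B (φ s) (ψ u)) u ∂μ := rfl
      _ = ∫ u in Ioc a s, B (φ s) (ψ u) := by
          rw [integral_indicator measurableSet_Iio, Measure.restrict_restrict measurableSet_Iio,
            this, integral_Ioc_eq_integral_Ioo]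
      _ = B (φ s) (∫ u in a..s, ψ u) := by
          rw [intervalIntegral.integral_of_le hs.1.le]
          exact (B (φ s)).integral_comp_comm (hψ.mono_set (Ioc_subset_Ioc_right hs.2))
  have above : ∫ p in Sᶜ, K p ∂μ.prod μ = ∫ u in Ioc a b, B (∫ s in a..u, φ s) (ψ u) := by
    rw [← integral_indicator hS.compl, integral_prod_symm _ (hK.indicator hS.compl)]
    refine setIntegral_congr_fun measurableSet_Ioc fun u hu => ?_
    have : Iic u ∩ Ioc a b = Ioc a u := by rw [inter_comm, Ioc_inter_Iic, min_eq_right hu.2]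
    calc ∫ s, Sᶜ.indicator K (s, u) ∂μ
        = ∫ s, (Iic u).indicator (fun s => B.flip (ψ u) (φ s)) s ∂μ := by
          congr 1 with s
          by_cases h : s ≤ u <;> simp [S, K, indicator, h]
      _ = B (∫ s in a..u, φ s) (ψ u) := by
          rw [integral_indicator measurableSet_Iic, Measure.restrict_restrict measurableSet_Iic,
            this, (B.flip (ψ u)).integral_comp_comm (hφ.mono_set (Ioc_subset_Ioc_right hu.2)),
            intervalIntegral.integral_of_le hu.1.le]
          rfl
  rw [← below, ← above, integral_add_compl hS hK]
  exact integral_prod_bilin B hφ hψ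

theorem integral_bilin_eq_sub_of_eq_add_integral (B : E →L[ℝ] F →L[ℝ] G)
    {a b : ℝ} (hab : a ≤ b) {φ : ℝ → E} {ψ : ℝ → F} {f : ℝ → E} {g : ℝ → F}
    (hφ : IntegrableOn φ (Icc a b)) (hψ : IntegrableOn ψ (Icc a b))
    (hf : ∀ t ∈ Icc a b, f t = f a + ∫ s in a..t, φ s)
    (hg : ∀ t ∈ Icc a b, g t = g a + ∫ s in a..t, ψ s) :
    ∫ t in a..b, (B (φ t) (g t) + B (f t) (ψ t)) = B (f b) (g b) - B (f a) (g a) := by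
  set Φ := fun t => ∫ s in a..t, φ s
  set Ψ := fun t => ∫ s in a..t, ψ s
  rw [← uIcc_of_le hab] at hφ hψ
  have hΦ : ContinuousOn Φ (uIcc a b) := intervalIntegral.continuousOn_primitive_interval hφ
  have hΨ : ContinuousOn Ψ (uIcc a b) := intervalIntegral.continuousOn_primitive_interval hψ
  have hφΨ := (hφ.bilin_continuousOn B isCompact_uIcc hΨ).intervalIntegrable
  have hΦψ := (hΦ.bilin_integrableOn B isCompact_uIcc hψ).intervalIntegrable
  have hφg := IntegrableOn.intervalIntegrable ((B.flip (g a)).integrable_comp hφ)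
  have hfψ := IntegrableOn.intervalIntegrable ((B (f a)).integrable_comp hψ)
  calc ∫ t in a..b, (B (φ t) (g t) + B (f t) (ψ t))
      = ∫ t in a..b, ((B.flip (g a) (φ t) + B (f a) (ψ t)) + (B (φ t) (Ψ t) + B (Φ t) (ψ t))) := by
        refine intervalIntegral.integral_congr fun t ht => ?_
        rw [uIcc_of_le hab] at ht
        simp only [hf t ht, hg t ht, map_add, add_apply, flip_apply, Φ, Ψ]
        abel
    _ = (B (Φ b) (g a) + B (f a) (Ψ b)) + B (Φ b) (Ψ b) := by
        rw [intervalIntegral.integral_add (hφg.add hfψ) (hφΨ.add hΦψ),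
          intervalIntegral.integral_add hφg hfψ, intervalIntegral.integral_add hφΨ hΦψ,
          (B.flip (g a)).intervalIntegral_comp_comm hφ.intervalIntegrable,
          (B (f a)).intervalIntegral_comp_comm hψ.intervalIntegrable,
          integral_bilin_primitive_add_integral_primitive_bilin B hab
            hφ.intervalIntegrable.1 hψ.intervalIntegrable.1]
        rfl
    _ = B (f b) (g b) - B (f a) (g a) := by
        rw [hf b (right_mem_Icc.2 hab), hg b (right_mem_Icc.2 hab)]
        simp only [map_add, add_apply]
        abel

theorem le_zero_of_le_mul_integral {u : ℝ → ℝ} {a b K : ℝ} (hK : 0 ≤ K)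
    (hu : ContinuousOn u (Icc a b)) (h : ∀ t ∈ Icc a b, u t ≤ K * ∫ s in t..b, u s) :
    ∀ t ∈ Icc a b, u t ≤ 0 := by
  set v : ℝ → ℝ := fun t => ∫ s in t..b, u s
  have hv : ContinuousOn v (Icc a b) := by
    rcases le_total a b with hab | hba
    · exact uIcc_of_le hab ▸ intervalIntegral.continuousOn_primitive_interval_left
        (uIcc_of_le hab ▸ hu.integrableOn_Icc)
    · exact (subsingleton_Icc_of_ge hba).continuousOn (f := v)
  have hv' : ∀ t ∈ Ioo a b, HasDerivAt v (-u t) t := fun t ht =>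
    intervalIntegral.integral_hasDerivAt_left
      ((hu.mono (Icc_subset_Icc_left ht.1.le)).intervalIntegrable_of_Icc ht.2.le)
      ((hu.mono Ioo_subset_Icc_self).stronglyMeasurableAtFilter isOpen_Ioo t ht)
      (hu.continuousAt (Icc_mem_nhds ht.1 ht.2))
  -- `exp (K t)` is an integrating factor for `v' = -u ≥ -K v`
  have hmono : MonotoneOn (fun t => Real.exp (K * t) * v t) (Icc a b) := by
    refine monotoneOn_of_hasDerivWithinAt_nonneg
      (f' := fun t => Real.exp (K * t) * (K * v t - u t)) (convex_Icc a b)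
      ((Real.continuous_exp.comp (continuous_const_mul K)).continuousOn.mul hv)
      (fun t ht => ?_) (fun t ht => ?_)
    · rw [interior_Icc] at ht
      exact (((hasDerivAt_id' t).const_mul K).exp.fun_mul (hv' t ht)).hasDerivWithinAt.congr_deriv
        (by ring)
    · rw [interior_Icc] at ht
      exact mul_nonneg (Real.exp_pos _).le (sub_nonneg.2 (h t (Ioo_subset_Icc_self ht)))
  intro t ht
  have hvt : v t ≤ 0 := by
    have := hmono ht (right_mem_Icc.2 (ht.1.trans ht.2)) ht.2
    simp only [v, intervalIntegral.integral_same, mul_zero] at this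
    exact nonpos_of_mul_nonpos_right this (Real.exp_pos _)
  exact (h t ht).trans (mul_nonpos_of_nonneg_of_nonpos hK hvt)

section
variable {E : Type*} [NormedAddCommGroup E] [NormedSpace ℝ E]

theorem continuousOn_of_eq_add_integral {f φ : ℝ → E} {a b : ℝ} (hφ : IntegrableOn φ (Icc a b))
    (hf : ∀ t ∈ Icc a b, f t = f a + ∫ s in a..t, φ s) : ContinuousOn f (Icc a b) := by
  refine (continuousOn_const.add ?_).congr hf
  rcases le_total a b with hab | hba
  · exact uIcc_of_le hab ▸ intervalIntegral.continuousOn_primitive_interval (uIcc_of_le hab ▸ hφ)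
  · exact (subsingleton_Icc_of_ge hba).continuousOn (f := fun t => ∫ s in a..t, φ s)

theorem eq_add_integral_neg_of_eq_integral [CompleteSpace E] {f φ : ℝ → E} {a b : ℝ}
    (hφ : IntegrableOn φ (Icc a b)) (hf : ∀ t ∈ Icc a b, f t = ∫ s in t..b, φ s) :
    ∀ t ∈ Icc a b, f t = f a + ∫ s in a..t, -φ s := by
  intro t ht
  have hab := ht.1.trans ht.2
  rw [hf t ht, hf a (left_mem_Icc.2 hab), intervalIntegral.integral_neg,
    ← intervalIntegral.integral_add_adjacent_intervals (b := t)
      ((intervalIntegrable_iff_integrableOn_Icc_of_le ht.1).2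
        (hφ.mono_set (Icc_subset_Icc_right ht.2)))
      ((intervalIntegrable_iff_integrableOn_Icc_of_le ht.2).2
        (hφ.mono_set (Icc_subset_Icc_left ht.1)))]
  abel

end

theorem trace_comp_smulRight_innerSL {E : Type*} [NormedAddCommGroup E] [InnerProductSpace ℝ E]
    [FiniteDimensional ℝ E] (Q : E →L[ℝ] E) (x y : E) :
    LinearMap.trace ℝ E (Q ∘L (innerSL ℝ y).smulRight x : E →L[ℝ] E) = ⟪y, Q x⟫ := by
  rw [← InnerProductSpace.rankOne_def, InnerProductSpace.comp_rankOne,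
    InnerProductSpace.rankOne_def]
  exact LinearMap.trace_smulRight _ _

section
variable {E : Type*} [NormedAddCommGroup E] [InnerProductSpace ℝ E] [CompleteSpace E]

theorem norm_comp_add_comp_adjoint_le (A D : E →L[ℝ] E) :
    ‖A ∘L D + D ∘L adjoint A‖ ≤ 2 * ‖A‖ * ‖D‖ :=
  calc ‖A ∘L D + D ∘L adjoint A‖ ≤ ‖A‖ * ‖D‖ + ‖D‖ * ‖adjoint A‖ :=
        (norm_add_le _ _).trans (add_le_add (opNorm_comp_le _ _) (opNorm_comp_le _ _))
    _ = 2 * ‖A‖ * ‖D‖ := by rw [LinearIsometryEquiv.norm_map]; ring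

theorem lyapunov_sub_adjoint (A W Q : E →L[ℝ] E) (hQ : IsSelfAdjoint Q) :
    (A ∘L W + W ∘L adjoint A + Q) - adjoint (A ∘L W + W ∘L adjoint A + Q)
      = A ∘L (W - adjoint W) + (W - adjoint W) ∘L adjoint A := by
  rw [isSelfAdjoint_iff'] at hQ
  simp only [map_add, adjoint_comp, adjoint_adjoint, hQ, comp_sub, sub_comp]
  abel

theorem isSelfAdjoint_of_eq_integral_lyapunov {A Q W : ℝ → E →L[ℝ] E} {a b C : ℝ}
    (hA : ∀ t ∈ Icc a b, ‖A t‖ ≤ C) (hQ : ∀ t ∈ Icc a b, IsSelfAdjoint (Q t))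
    (hF : IntegrableOn (fun s => A s ∘L W s + W s ∘L adjoint (A s) + Q s) (Icc a b))
    (hW : ∀ t ∈ Icc a b, W t = ∫ s in t..b, (A s ∘L W s + W s ∘L adjoint (A s) + Q s)) :
    ∀ t ∈ Icc a b, IsSelfAdjoint (W t) := by
  set F := fun s => A s ∘L W s + W s ∘L adjoint (A s) + Q s
  set D := fun t => W t - adjoint (W t)
  have hWc := continuousOn_of_eq_add_integral hF.neg (eq_add_integral_neg_of_eq_integral hF hW)
  have hDc : ContinuousOn D (Icc a b) :=
    hWc.sub ((adjoint : (E →L[ℝ] E) ≃ₗᵢ⋆[ℝ] _).continuous.comp_continuousOn hWc)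
  have hD : ∀ t ∈ Icc a b, D t = ∫ s in t..b, (A s ∘L D s + D s ∘L adjoint (A s)) := by
    intro t ht
    have hFt := hF.mono_set (Icc_subset_Icc_left ht.1)
    have hadj : ∫ s in t..b, adjoint (F s) = adjoint (W t) := by
      rw [hW t ht]
      exact (adjoint : (E →L[ℝ] E) ≃ₗᵢ⋆[ℝ] _).toLinearIsometry.intervalIntegral_comp_comm F
    calc D t = (∫ s in t..b, F s) - ∫ s in t..b, adjoint (F s) := by rw [hadj, ← hW t ht]
      _ = ∫ s in t..b, (F s - adjoint (F s)) :=
        (intervalIntegral.integral_sub ((intervalIntegrable_iff_integrableOn_Icc_of_le ht.2).2 hFt)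
          ((intervalIntegrable_iff_integrableOn_Icc_of_le ht.2).2
            ((LinearIsometryEquiv.integrable_comp_iff
              (adjoint : (E →L[ℝ] E) ≃ₗᵢ⋆[ℝ] _)).2 hFt))).symm
      _ = ∫ s in t..b, (A s ∘L D s + D s ∘L adjoint (A s)) :=
        intervalIntegral.integral_congr fun s hs => lyapunov_sub_adjoint (A s) (W s) (Q s)
          (hQ s (Icc_subset_Icc_left ht.1 (uIcc_of_le ht.2 ▸ hs)))
  intro t₀ ht₀
  have hC : 0 ≤ C := (norm_nonneg _).trans (hA t₀ ht₀)
  have hbound : ∀ t ∈ Icc a b, ‖D t‖ ≤ 2 * C * ∫ s in t..b, ‖D s‖ := by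
    intro t ht
    rw [hD t ht, ← intervalIntegral.integral_const_mul]
    refine intervalIntegral.norm_integral_le_of_norm_le ht.2 (.of_forall fun s hs => ?_)
      (((hDc.mono (Icc_subset_Icc_left ht.1)).norm.const_smul (2 * C)).intervalIntegrable_of_Icc
        ht.2)
    calc ‖A s ∘L D s + D s ∘L adjoint (A s)‖ ≤ 2 * ‖A s‖ * ‖D s‖ :=
          norm_comp_add_comp_adjoint_le _ _
      _ ≤ 2 * C * ‖D s‖ := by gcongr; exact hA s ⟨ht.1.trans hs.1.le, hs.2⟩
  have := le_zero_of_le_mul_integral (by positivity) hDc.norm hbound t₀ ht₀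
  rw [isSelfAdjoint_iff', eq_comm, ← sub_eq_zero]
  exact norm_le_zero_iff.1 this

theorem integral_deriv_inner_apply_eq_sub {W W' : ℝ → E →L[ℝ] E} {X X' : ℝ → E} {a b : ℝ}
    (hab : a ≤ b) (hW' : IntegrableOn W' (Icc a b)) (hX' : IntegrableOn X' (Icc a b))
    (hW : ∀ t ∈ Icc a b, W t = W a + ∫ s in a..t, W' s)
    (hX : ∀ t ∈ Icc a b, X t = X a + ∫ s in a..t, X' s) :
    ∫ t in a..b, (⟪W' t (X t) + W t (X' t), X t⟫ + ⟪W t (X t), X' t⟫)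
      = ⟪W b (X b), X b⟫ - ⟪W a (X a), X a⟫ := by
  have hWc := continuousOn_of_eq_add_integral hW' hW
  have hXc := continuousOn_of_eq_add_integral hX' hX
  -- `(L, x) ↦ L x` as a bounded bilinear map
  set app := ContinuousLinearMap.id ℝ (E →L[ℝ] E)
  have hWX : ∀ t ∈ Icc a b, W t (X t) = W a (X a) + ∫ s in a..t, (W' s (X s) + W s (X' s)) := by
    intro t ht
    have hsub : Icc a t ⊆ Icc a b := Icc_subset_Icc_right ht.2
    have := integral_bilin_eq_sub_of_eq_add_integral app ht.1 (hW'.mono_set hsub)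
      (hX'.mono_set hsub) (fun s hs => hW s (hsub hs)) (fun s hs => hX s (hsub hs))
    simp only [app, id_apply] at this
    rw [this]
    abel
  exact integral_bilin_eq_sub_of_eq_add_integral (innerSL ℝ) hab
    ((hW'.bilin_continuousOn app isCompact_Icc hXc).add
      (hWc.bilin_integrableOn app isCompact_Icc hX')) hX' hWX hX

theorem inner_neg_lyapunov_add_inner_eq {A Q W : E →L[ℝ] E} (hW : IsSelfAdjoint W) (x c : E) :
    ⟪(-(A ∘L W + W ∘L adjoint A + Q)) x + W (adjoint A x + c), x⟫ + ⟪W x, adjoint A x + c⟫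
      = 2 * ⟪W c, x⟫ - ⟪x, Q x⟫ := by
  have hWc : ⟪W x, c⟫ = ⟪W c, x⟫ := by
    rw [← hW.adjoint_eq, adjoint_inner_left, hW.adjoint_eq, real_inner_comm]
  simp only [neg_apply, add_apply, comp_apply, map_add, inner_add_left, inner_add_right,
    inner_neg_left, adjoint_inner_right, hWc, real_inner_comm x (Q x)]
  ring

theorem integral_inner_apply_eq_two_mul_integral_inner {A Q W : ℝ → E →L[ℝ] E} {b X : ℝ → E}
    {T C : ℝ} (hT : 0 ≤ T) (hA : IntegrableOn A (Icc 0 T)) (hAC : ∀ t ∈ Icc 0 T, ‖A t‖ ≤ C)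
    (hQ : IntegrableOn Q (Icc 0 T)) (hb : IntegrableOn b (Icc 0 T))
    (hQsymm : ∀ t ∈ Icc 0 T, IsSelfAdjoint (Q t))
    (hWc : ContinuousOn W (Icc 0 T))
    (hW : ∀ t ∈ Icc 0 T, W t = ∫ s in t..T, (A s ∘L W s + W s ∘L adjoint (A s) + Q s))
    (hXc : ContinuousOn X (Icc 0 T))
    (hX : ∀ t ∈ Icc 0 T, X t = ∫ s in (0:ℝ)..t, (adjoint (A s) (X s) + b s)) :
    ∫ t in (0:ℝ)..T, ⟪X t, Q t (X t)⟫ = 2 * ∫ t in (0:ℝ)..T, ⟪W t (b t), X t⟫ := by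
  have hA' : IntegrableOn (fun s => adjoint (A s)) (Icc 0 T) :=
    (LinearIsometryEquiv.integrable_comp_iff (adjoint : (E →L[ℝ] E) ≃ₗᵢ⋆[ℝ] _)).2 hA
  have hF : IntegrableOn (fun s => A s ∘L W s + W s ∘L adjoint (A s) + Q s) (Icc 0 T) :=
    ((hA.bilin_continuousOn (compL ℝ E E E) isCompact_Icc hWc).add
      (hWc.bilin_integrableOn (compL ℝ E E E) isCompact_Icc hA')).add hQ
  have hX' : IntegrableOn (fun s => adjoint (A s) (X s) + b s) (Icc 0 T) :=
    (hA'.bilin_continuousOn (.id ℝ _) isCompact_Icc hXc).add hb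
  have hWsymm := isSelfAdjoint_of_eq_integral_lyapunov hAC hQsymm hF hW
  have hWT : W T = 0 := by simpa using hW T (right_mem_Icc.2 hT)
  have hX0 : X 0 = 0 := by simpa using hX 0 (left_mem_Icc.2 hT)
  have key := integral_deriv_inner_apply_eq_sub (W := W) (X := X)
    (W' := fun s => -(A s ∘L W s + W s ∘L adjoint (A s) + Q s)) hT hF.neg hX'
    (eq_add_integral_neg_of_eq_integral hF hW)
    (fun t ht => by rw [hX0, zero_add]; exact hX t ht)
  rw [hWT, hX0, zero_apply, map_zero, inner_zero_left, inner_zero_left, sub_zero,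
    intervalIntegral.integral_congr (g := fun t => 2 * ⟪W t (b t), X t⟫ - ⟪X t, Q t (X t)⟫)
      fun t ht =>
      inner_neg_lyapunov_add_inner_eq (A := A t) (hWsymm t (uIcc_of_le hT ▸ ht)) (X t) (b t),
    intervalIntegral.integral_sub, intervalIntegral.integral_const_mul] at key
  · linarith
  · exact ((intervalIntegrable_iff_integrableOn_Icc_of_le hT).2
      ((hWc.bilin_integrableOn (.id ℝ _) isCompact_Icc hb).bilin_continuousOn (innerSL ℝ)
        isCompact_Icc hXc)).const_mul 2
  · exact (intervalIntegrable_iff_integrableOn_Icc_of_le hT).2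
      (hXc.bilin_integrableOn (innerSL ℝ) isCompact_Icc
        (hQ.bilin_continuousOn (.id ℝ _) isCompact_Icc hXc))

end

theorem stmt_9 {n : ℕ} (T : ℝ) (hT : 0 < T)
    (A Q : ℝ → EuclideanSpace ℝ (Fin n) →L[ℝ] EuclideanSpace ℝ (Fin n))
    (b : ℝ → EuclideanSpace ℝ (Fin n))
    (hAm : StronglyMeasurable A) (hQm : StronglyMeasurable Q) (hbm : Measurable b)
    (CA CQ Cb : ℝ) (hCA : ∀ t, ‖A t‖ ≤ CA) (hCQ : ∀ t, ‖Q t‖ ≤ CQ) (hCb : ∀ t, ‖b t‖ ≤ Cb)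
    (hQsymm : ∀ t ∈ Icc 0 T, IsSelfAdjoint (Q t))
    (W : ℝ → EuclideanSpace ℝ (Fin n) →L[ℝ] EuclideanSpace ℝ (Fin n))
    (hWc : ContinuousOn W (Icc 0 T))
    (hW : ∀ t ∈ Icc 0 T, W t = ∫ s in t..T,
      (A s ∘L W s + W s ∘L ContinuousLinearMap.adjoint (A s) + Q s))
    (X : ℝ → EuclideanSpace ℝ (Fin n)) (hXc : ContinuousOn X (Icc 0 T))
    (hX : ∀ t ∈ Icc 0 T, X t = ∫ s in (0:ℝ)..t,
      (ContinuousLinearMap.adjoint (A s) (X s) + b s)) :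
    -(1/2) * ∫ t in (0:ℝ)..T,
        (LinearMap.trace ℝ (EuclideanSpace ℝ (Fin n))
          ((Q t ∘L ((innerSL ℝ (X t)).smulRight (X t))) :
            EuclideanSpace ℝ (Fin n) →L[ℝ] EuclideanSpace ℝ (Fin n)))
      = -∫ t in (0:ℝ)..T, ⟪W t (b t), X t⟫ := by
  rw [intervalIntegral.integral_congr fun t _ => trace_comp_smulRight_innerSL (Q t) (X t) (X t),
    integral_inner_apply_eq_two_mul_integral_inner hT.le
      (Measure.integrableOn_of_bounded measure_Icc_lt_top.ne hAm.aestronglyMeasurable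
        (.of_forall hCA))
      (fun t _ => hCA t)
      (Measure.integrableOn_of_bounded measure_Icc_lt_top.ne hQm.aestronglyMeasurable
        (.of_forall hCQ))
      (Measure.integrableOn_of_bounded measure_Icc_lt_top.ne hbm.aestronglyMeasurable
        (.of_forall hCb))
      hQsymm hWc hW hXc hX]
  ring
end
end

section
/- Let $F,G:[0,T]\to\mathbb{R}^n$ be bounded measurable, and let $\beta\in[0,T)$ be a common Lebesgue point of $F$, $|F|^2$, and $G$ (i.e., $\frac1\alpha\int_\beta^{\beta+\alpha}(F,|F|^2,G)\to(F(\beta),|F(\beta)|^2,G(\beta))$ as $\alpha\to0^+$). Then $\lim_{\alpha\to0^+}\frac{2}{\alpha^2}\int_\beta^{\beta+\alpha}\!\!dt\int_\beta^t\langle F(t),G(s)\rangle\,ds=\langle F(\beta),G(\beta)\rangle$. -/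
/-!
Since `β` is a Lebesgue point of `G`, `∫_β^t G = (t - β) • G β + o(t - β)`; as `F` is bounded,
the double integral equals `∫_β^{β+α} (t - β) ⟪F t, G β⟫ dt + o(α²)`. Integrating by parts, this
weighted integral is `α H(β + α) - ∫_β^{β+α} H`, where `H` is the primitive of `⟪F ·, G β⟫` from
`β`, and `H(t) = (t - β) ⟪F β, G β⟫ + o(t - β)` because `β` is a Lebesgue point of `F`.
-/

open MeasureTheory Set Filter Topology Asymptotics
open scoped RealInnerProductSpace

theorem intervalIntegrable_of_norm_le {E : Type*} [NormedAddCommGroup E] {f : ℝ → E} {C : ℝ}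
    (hf : AEStronglyMeasurable f volume) (hC : ∀ t, ‖f t‖ ≤ C) (a b : ℝ) :
    IntervalIntegrable f volume a b :=
  intervalIntegrable_const.mono_fun' hf.restrict (ae_of_all _ hC)

theorem intervalIntegral_const_mul_sub (ε a α : ℝ) :
    ∫ t in a..a + α, ε * (t - a) = ε * (α ^ 2 / 2) := by
  rw [intervalIntegral.integral_const_mul, intervalIntegral.integral_comp_sub_right (fun x => x)]
  simp

theorem intervalIntegral_sub_mul_eq {g : ℝ → ℝ} {a b : ℝ} (hg : IntervalIntegrable g volume a b) :
    ∫ t in a..b, (t - a) * g t =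
      (b - a) * (∫ t in a..b, g t) - ∫ t in a..b, ∫ s in a..t, g s := by
  have hH := hg.absolutelyContinuousOnInterval_intervalIntegral (c := a) (by simp)
  have hid : AbsolutelyContinuousOnInterval (fun t => t - a) a b :=
    (contDiffOn_id.sub contDiffOn_const).absolutelyContinuousOnInterval
  have hderiv : ∀ᵐ t, t ∈ uIoc a b → deriv (fun x => ∫ s in a..x, g s) t = g t := by
    filter_upwards [hg.ae_hasDerivAt_integral] with t ht htab
    exact (ht (uIoc_subset_uIcc htab) a (by simp)).deriv
  rw [intervalIntegral.integral_congr_ae (hderiv.mono fun t ht htab => by rw [← ht htab]),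
    hid.integral_mul_deriv_eq_deriv_mul hH]
  simp

section LittleO

variable {E : Type*} [NormedAddCommGroup E] [NormedSpace ℝ E]

theorem isLittleO_sub_smul_of_tendsto_inv_smul {h : ℝ → E} {c : E}
    (hh : Tendsto (fun α => α⁻¹ • h α) (𝓝[>] 0) (𝓝 c)) :
    (fun α => h α - α • c) =o[𝓝[>] 0] id := by
  have hsmall : (fun α => α⁻¹ • h α - c) =o[𝓝[>] 0] (fun _ => (1 : ℝ)) :=
    (isLittleO_one_iff ℝ).2 (by simpa using hh.sub_const c)
  refine ((isBigO_refl id _).smul_isLittleO hsmall).congr' ?_ (.of_forall fun _ => by simp)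
  filter_upwards [self_mem_nhdsWithin] with α (hα : 0 < α)
  simp [smul_sub, smul_inv_smul₀ hα.ne']

theorem isLittleO_intervalIntegral_sq {h : ℝ → E} {a : ℝ}
    (hh : (fun u => h (a + u)) =o[𝓝[>] 0] id) :
    (fun α => ∫ t in a..a + α, h t) =o[𝓝[>] 0] (fun α => α ^ 2) := by
  refine IsLittleO.of_bound fun ε hε => ?_
  obtain ⟨δ, hδ, hsmall⟩ := mem_nhdsGT_iff_exists_Ioo_subset.1 (hh.def hε)
  filter_upwards [Ioo_mem_nhdsGT hδ] with α ⟨hα0, hαδ⟩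
  have hbound : ∀ t ∈ Ioc a (a + α), ‖h t‖ ≤ ε * (t - a) := by
    intro t ⟨hat, hta⟩
    simpa [abs_of_pos (sub_pos.2 hat)] using hsmall ⟨sub_pos.2 hat, by linarith⟩
  calc ‖∫ t in a..a + α, h t‖ ≤ ∫ t in a..a + α, ε * (t - a) :=
        intervalIntegral.norm_integral_le_of_norm_le (by linarith) (ae_of_all _ hbound)
          ((continuous_const.mul (continuous_sub_right a)).intervalIntegrable _ _)
    _ = ε * (α ^ 2 / 2) := intervalIntegral_const_mul_sub ε a α
    _ ≤ ε * ‖α ^ 2‖ := by rw [Real.norm_of_nonneg (by positivity)]; nlinarith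

end LittleO

theorem tendsto_two_div_sq_mul_integral_sub_mul {g : ℝ → ℝ} {a c : ℝ}
    (hg : ∀ s t, IntervalIntegrable g volume s t)
    (hlim : Tendsto (fun α => α⁻¹ * ∫ t in a..a + α, g t) (𝓝[>] 0) (𝓝 c)) :
    Tendsto (fun α => 2 / α ^ 2 * ∫ t in a..a + α, (t - a) * g t) (𝓝[>] 0) (𝓝 c) := by
  set H := fun t => ∫ s in a..t, g s
  have hH : Continuous H := intervalIntegral.continuous_primitive hg a
  have hrem : (fun α => ∫ t in a..a + α, (H t - c * (t - a))) =o[𝓝[>] 0] (fun α => α ^ 2) :=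
    isLittleO_intervalIntegral_sq <| by
      simpa [mul_comm c] using
        isLittleO_sub_smul_of_tendsto_inv_smul (h := fun α => H (a + α)) hlim
  have hlim' := ((hlim.const_mul 2).sub_const c).sub (hrem.tendsto_div_nhds_zero.const_mul 2)
  rw [show 2 * c - c - 2 * 0 = c by ring] at hlim'
  refine hlim'.congr' ?_
  filter_upwards [self_mem_nhdsWithin] with α (hα : 0 < α)
  have hsplit : ∫ t in a..a + α, H t =
      (∫ t in a..a + α, (H t - c * (t - a))) + c * (α ^ 2 / 2) := by
    rw [intervalIntegral.integral_sub (hH.intervalIntegrable _ _)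
      ((by fun_prop : Continuous fun t => c * (t - a)).intervalIntegrable _ _),
      intervalIntegral_const_mul_sub]
    ring
  rw [intervalIntegral_sub_mul_eq (hg _ _), hsplit]
  field_simp
  ring

section InnerProduct

variable {E : Type*} [NormedAddCommGroup E] [InnerProductSpace ℝ E] {F G : ℝ → E} {C a : ℝ}

theorem intervalIntegral_inner_const [CompleteSpace E] {b : ℝ}
    (hF : IntervalIntegrable F volume a b) (c : E) :
    ∫ t in a..b, ⟪F t, c⟫ = ⟪∫ t in a..b, F t, c⟫ := by
  simpa [real_inner_comm c] using (innerSL ℝ c).intervalIntegral_comp_comm hF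

theorem intervalIntegrable_inner_const (hFm : AEStronglyMeasurable F volume)
    (hFC : ∀ t, ‖F t‖ ≤ C) (c : E) (a b : ℝ) :
    IntervalIntegrable (fun t => ⟪F t, c⟫) volume a b :=
  intervalIntegrable_of_norm_le (hFm.inner aestronglyMeasurable_const)
    (fun t => (norm_inner_le_norm _ _).trans (mul_le_mul_of_nonneg_right (hFC t) (norm_nonneg c)))
    a b

theorem intervalIntegral_integral_inner_eq [CompleteSpace E] (hFm : AEStronglyMeasurable F volume)
    (hFC : ∀ t, ‖F t‖ ≤ C) (hG : ∀ s t, IntervalIntegrable G volume s t) (c : E) (b : ℝ) :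
    ∫ t in a..b, ∫ s in a..t, ⟪F t, G s⟫ =
      (∫ t in a..b, (t - a) * ⟪F t, c⟫) +
        ∫ t in a..b, ⟪F t, (∫ s in a..t, G s) - (t - a) • c⟫ := by
  have hR : Continuous fun t => (∫ s in a..t, G s) - (t - a) • c :=
    (intervalIntegral.continuous_primitive hG a).sub (by fun_prop)
  have hmain : IntervalIntegrable (fun t => (t - a) * ⟪F t, c⟫) volume a b :=
    (intervalIntegrable_inner_const hFm hFC c a b).continuousOn_mul (by fun_prop)
  have hrem : IntervalIntegrable (fun t => ⟪F t, (∫ s in a..t, G s) - (t - a) • c⟫) volume a b :=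
    ((hR.norm.intervalIntegrable a b).const_mul C).mono_fun'
      (hFm.inner hR.aestronglyMeasurable).restrict (ae_of_all _ fun t =>
        (norm_inner_le_norm _ _).trans (mul_le_mul_of_nonneg_right (hFC t) (norm_nonneg _)))
  refine (intervalIntegral.integral_congr fun t _ => ?_).trans
    (intervalIntegral.integral_add hmain hrem)
  have hpull := (innerSL ℝ (F t)).intervalIntegral_comp_comm (hG a t)
  simp only [innerSL_apply_apply] at hpull
  simp only [hpull, inner_sub_right, real_inner_smul_right]
  ring

theorem isLittleO_intervalIntegral_inner_primitive_sub (hFC : ∀ t, ‖F t‖ ≤ C) {c : E}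
    (hGa : Tendsto (fun α => α⁻¹ • ∫ t in a..a + α, G t) (𝓝[>] 0) (𝓝 c)) :
    (fun α => ∫ t in a..a + α, ⟪F t, (∫ s in a..t, G s) - (t - a) • c⟫) =o[𝓝[>] 0]
      (fun α => α ^ 2) := by
  refine isLittleO_intervalIntegral_sq (IsBigO.trans_isLittleO ?_
    (isLittleO_sub_smul_of_tendsto_inv_smul hGa))
  refine IsBigO.of_bound C (.of_forall fun u => ?_)
  simp only [add_sub_cancel_left, Real.norm_eq_abs]
  exact (abs_real_inner_le_norm _ _).trans (mul_le_mul_of_nonneg_right (hFC _) (norm_nonneg _))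

end InnerProduct

theorem stmt_11_general {n : ℕ}
    (F G : ℝ → EuclideanSpace ℝ (Fin n))
    (hFm : Measurable F) (hGm : Measurable G)
    (CF CG : ℝ) (hCF : ∀ t, ‖F t‖ ≤ CF) (hCG : ∀ t, ‖G t‖ ≤ CG)
    (β : ℝ)
    (hF : Filter.Tendsto (fun α => α⁻¹ • ∫ t in β..(β + α), F t)
      (nhdsWithin 0 (Ioi 0)) (nhds (F β)))
    (hG : Filter.Tendsto (fun α => α⁻¹ • ∫ t in β..(β + α), G t)
      (nhdsWithin 0 (Ioi 0)) (nhds (G β))) :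
    Filter.Tendsto (fun α => (2 / α ^ 2) * ∫ t in β..(β + α), ∫ s in β..t, ⟪F t, G s⟫)
      (nhdsWithin 0 (Ioi 0)) (nhds ⟪F β, G β⟫) := by
  have hFint := intervalIntegrable_of_norm_le hFm.aestronglyMeasurable hCF
  have hGint := intervalIntegrable_of_norm_le hGm.aestronglyMeasurable hCG
  have hFGβ : Tendsto (fun α => α⁻¹ * ∫ t in β..β + α, ⟪F t, G β⟫) (𝓝[>] 0) (𝓝 ⟪F β, G β⟫) := by
    simpa only [intervalIntegral_inner_const (hFint _ _), real_inner_smul_left] using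
      hF.inner (𝕜 := ℝ) tendsto_const_nhds
  have hmain := tendsto_two_div_sq_mul_integral_sub_mul
    (intervalIntegrable_inner_const hFm.aestronglyMeasurable hCF (G β)) hFGβ
  have hrem := (isLittleO_intervalIntegral_inner_primitive_sub hCF hG).tendsto_div_nhds_zero
  convert hmain.add (hrem.const_mul 2) using 2 with α
  · rw [intervalIntegral_integral_inner_eq hFm.aestronglyMeasurable hCF hGint (G β)]
    ring
  · simp

theorem stmt_11 {n : ℕ} (T : ℝ) (hT : 0 < T)
    (F G : ℝ → EuclideanSpace ℝ (Fin n))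
    (hFm : Measurable F) (hGm : Measurable G)
    (CF CG : ℝ) (hCF : ∀ t, ‖F t‖ ≤ CF) (hCG : ∀ t, ‖G t‖ ≤ CG)
    (β : ℝ) (hβ : β ∈ Ico 0 T)
    (hF : Filter.Tendsto (fun α => α⁻¹ • ∫ t in β..(β + α), F t)
      (nhdsWithin 0 (Ioi 0)) (nhds (F β)))
    (hF2 : Filter.Tendsto (fun α => α⁻¹ * ∫ t in β..(β + α), ‖F t‖ ^ 2)
      (nhdsWithin 0 (Ioi 0)) (nhds (‖F β‖ ^ 2)))
    (hG : Filter.Tendsto (fun α => α⁻¹ • ∫ t in β..(β + α), G t)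
      (nhdsWithin 0 (Ioi 0)) (nhds (G β))) :
    Filter.Tendsto (fun α => (2 / α ^ 2) * ∫ t in β..(β + α), ∫ s in β..t, ⟪F t, G s⟫)
      (nhdsWithin 0 (Ioi 0)) (nhds ⟪F β, G β⟫) :=
  stmt_11_general F G hFm hGm CF CG hCF hCG β hF hG
end

section
/- There exist $T>0$, a set $U\subseteq[0,T]$ containing $0$ that is non-measurable and contains no measurable subset of positive measure, and smooth functions $H(t,u)=-u^2(t-u)^2$, $g(t,u)=u^2$ on $[0,T]\times U$, such that: (a) the argmax set $\bar U(t)=\{u\in U: H(t,u)=\max_{v\in U}H(t,v)\}$ equals $\{0\}$ for $t\notin U$ and $\{0,t\}$ for $t\in U$; (b) every measurable function $u:[0,T]\to U$ with $u(t)\in\bar U(t)$ a.e. satisfies $u(t)=0$ a.e., hence $g(t,u(t))\le0$ a.e.; but (c) the set $\{t\in[0,T]:\exists v\in\bar U(t),\,g(t,v)>0\}=U\setminus\{0\}$ is not of measure zero. -/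
open MeasureTheory Set

/-! Take `U = {0} ∪ V` with `V ⊆ [0, 1]` a Vitali set. The rational translates of a measurable
subset of `V` are disjoint and stay in a bounded interval, so that subset is null, while countably
many translates of `V` cover `ℝ`, so `V` is not null. Since `-u²(t - u)² ≤ 0` with equality exactly
for `u ∈ {0, t}`, the argmax set at `t` is `U ∩ {0, t}`. A measurable selection is nonzero only on
a measurable set of times lying a.e. inside `U`, hence null; yet every `t ∈ U \ {0}` admits the
maximiser `t`, where `g = t² > 0`. -/

structure IsVitaliSet (V : Set ℝ) : Prop where
  subset_Icc : V ⊆ Icc 0 1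
  exists_sub_eq_rat (x : ℝ) : ∃ v ∈ V, ∃ q : ℚ, x - v = q
  eq_of_sub_eq_rat {x y : ℝ} (hx : x ∈ V) (hy : y ∈ V) (q : ℚ) : x - y = q → x = y

theorem exists_isVitaliSet : ∃ V, IsVitaliSet V := by
  let Q : AddSubgroup ℝ := (Rat.castHom ℝ).toAddMonoidHom.range
  have mem_Q {x : ℝ} : x ∈ Q ↔ ∃ q : ℚ, (q : ℝ) = x := Iff.rfl
  have mk_fract (x : ℝ) : ((Int.fract x : ℝ) : ℝ ⧸ Q) = x :=
    QuotientAddGroup.eq.2 (mem_Q.2 ⟨⌊x⌋, by push_cast; linarith [Int.fract_add_floor x]⟩)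
  let rep (c : ℝ ⧸ Q) : ℝ := Int.fract c.out
  have mk_rep (c : ℝ ⧸ Q) : (rep c : ℝ ⧸ Q) = c := (mk_fract _).trans (QuotientAddGroup.out_eq' c)
  refine ⟨range rep, ?_, fun x => ?_, ?_⟩
  · rintro _ ⟨c, rfl⟩
    exact ⟨Int.fract_nonneg _, (Int.fract_lt_one _).le⟩
  · obtain ⟨q, hq⟩ := mem_Q.1 (QuotientAddGroup.eq.1 (mk_rep x))
    exact ⟨rep x, mem_range_self _, q, by rw [hq]; ring⟩
  · rintro _ _ ⟨c, rfl⟩ ⟨d, rfl⟩ q hq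
    have hdc : (rep d : ℝ ⧸ Q) = rep c := QuotientAddGroup.eq.2 (mem_Q.2 ⟨q, by rw [← hq]; ring⟩)
    rw [mk_rep, mk_rep] at hdc
    rw [hdc]

namespace IsVitaliSet

theorem measure_eq_zero_of_subset {V s : Set ℝ} (hV : IsVitaliSet V) (hsV : s ⊆ V)
    (hs : MeasurableSet s) : volume s = 0 := by
  by_contra hs0
  let translate (q : Icc (0 : ℚ) 1) : Set ℝ := (· + (q : ℝ)) ⁻¹' s
  have translate_subset (q : Icc (0 : ℚ) 1) : translate q ⊆ Icc (-1) 1 := by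
    intro x hx
    obtain ⟨h0, h1⟩ := hV.subset_Icc (hsV hx)
    have : (0 : ℝ) ≤ q ∧ (q : ℝ) ≤ 1 := by exact_mod_cast q.2
    constructor <;> linarith
  obtain ⟨q, r, hqr, x, hxq, hxr⟩ := exists_nonempty_inter_of_measure_univ_lt_tsum_measure
    (volume.restrict (Icc (-1) 1)) (s := translate)
    (fun q => (hs.preimage (measurable_add_const _)).nullMeasurableSet) (by
      have : Infinite (Icc (0 : ℚ) 1) := (Set.Icc_infinite zero_lt_one).to_subtype
      simp only [Measure.restrict_apply_univ, Real.volume_Icc,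
        Measure.restrict_eq_self _ (translate_subset _), translate, measure_preimage_add_right,
        ENNReal.tsum_const_eq_top_of_ne_zero hs0]
      exact ENNReal.ofReal_lt_top)
  have hqr' := hV.eq_of_sub_eq_rat (hsV hxq) (hsV hxr) (q - r) (by push_cast; ring)
  exact hqr (Subtype.ext (by exact_mod_cast add_left_cancel hqr'))

theorem measure_ne_zero {V : Set ℝ} (hV : IsVitaliSet V) : volume V ≠ 0 := by
  intro hV0
  have cover : (univ : Set ℝ) ⊆ ⋃ q : ℚ, (· + (q : ℝ)) ⁻¹' V := fun x _ => by
    obtain ⟨v, hv, q, hq⟩ := hV.exists_sub_eq_rat x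
    exact mem_iUnion.2 ⟨-q, by simpa [← sub_eq_add_neg, ← hq] using hv⟩
  have h_univ := measure_mono_null cover (measure_iUnion_null fun q => by
    rwa [measure_preimage_add_right volume])
  simp at h_univ

end IsVitaliSet

section InnerNull

variable {α : Type*} [MeasurableSpace α] {μ : Measure α} {U : Set α}

theorem forall_measure_eq_zero_insert [MeasurableSingletonClass α] [NullSingletonClass μ] (a : α)
    (hU : ∀ s ⊆ U, MeasurableSet s → μ s = 0) :
    ∀ s ⊆ insert a U, MeasurableSet s → μ s = 0 := by
  intro s hs hsm
  rw [← measure_sdiff_null (measure_singleton a)]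
  exact hU _ (fun x hx => (hs hx.1).resolve_left hx.2) (hsm.diff (measurableSet_singleton a))

theorem measure_eq_zero_of_ae_subset (hU : ∀ s ⊆ U, MeasurableSet s → μ s = 0) {B : Set α}
    (hB : NullMeasurableSet B μ) (hBU : ∀ᵐ x ∂μ, x ∈ B → x ∈ U) : μ B = 0 := by
  obtain ⟨t, htB, ht, ht_ae⟩ := hB.exists_measurable_subset_ae_eq
  set N := toMeasurable μ {x | ¬(x ∈ B → x ∈ U)}
  have hN : μ N = 0 := by rwa [measure_toMeasurable, ← ae_iff]
  rw [← measure_congr ht_ae, ← measure_sdiff_null hN]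
  refine hU _ (fun x hx => ?_) (ht.diff (measurableSet_toMeasurable _ _))
  by_contra hxU
  exact hx.2 (subset_toMeasurable _ _ fun h => hxU (h (htB hx.1)))

theorem ae_eq_zero_of_ae_mem_inter_pair [Zero α] [MeasurableSingletonClass α]
    (hU : ∀ s ⊆ U, MeasurableSet s → μ s = 0) {S : Set α} (hS : MeasurableSet S) {u : α → α}
    (hu : Measurable u) (hae : ∀ᵐ t ∂μ, t ∈ S → u t ∈ U ∩ {0, t}) :
    ∀ᵐ t ∂μ, t ∈ S → u t = 0 := by
  simp only [ae_iff, Classical.not_imp]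
  refine measure_eq_zero_of_ae_subset hU
    (hS.inter (hu (measurableSet_singleton 0).compl)).nullMeasurableSet ?_
  filter_upwards [hae] with t ht ⟨htS, hut⟩
  obtain ⟨hutU, hut0 | hut_t⟩ := ht htS
  exacts [absurd hut0 hut, mem_singleton_iff.1 hut_t ▸ hutU]

end InnerNull

theorem argmax_eq_inter {U : Set ℝ} (h0 : 0 ∈ U) (t : ℝ) :
    {u ∈ U | ∀ v ∈ U, -(v ^ 2 * (t - v) ^ 2) ≤ -(u ^ 2 * (t - u) ^ 2)} = U ∩ {0, t} := by
  have eq_zero_iff (u : ℝ) : u ^ 2 * (t - u) ^ 2 = 0 ↔ u ∈ ({0, t} : Set ℝ) := by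
    simp [sub_eq_zero, eq_comm]
  ext u
  refine and_congr_right fun _ => ⟨fun hmax => (eq_zero_iff u).1 ?_, fun hu v _ => ?_⟩
  · nlinarith [hmax 0 h0, mul_nonneg (sq_nonneg u) (sq_nonneg (t - u))]
  · rw [(eq_zero_iff u).2 hu, neg_zero, neg_nonpos]
    positivity

theorem stmt_14 :
    ∃ T : ℝ, 0 < T ∧ ∃ U : Set ℝ, 0 ∈ U ∧ U ⊆ Icc 0 T ∧
      ¬ MeasurableSet U ∧
      (∀ s ⊆ U, MeasurableSet s → volume s = 0) ∧
      (let H : ℝ → ℝ → ℝ := fun t u => -(u ^ 2 * (t - u) ^ 2)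
       let g : ℝ → ℝ → ℝ := fun _ u => u ^ 2
       let Ubar : ℝ → Set ℝ := fun t => {u ∈ U | ∀ v ∈ U, H t v ≤ H t u}
       -- (a) description of the argmax sets
       (∀ t ∈ Icc 0 T, (t ∈ U → Ubar t = {0, t}) ∧ (t ∉ U → Ubar t = {0})) ∧
       -- (b) every measurable selection of the argmax sets vanishes a.e.
       (∀ u : ℝ → ℝ, Measurable u →
          (∀ᵐ t ∂(volume : Measure ℝ), t ∈ Icc 0 T → u t ∈ Ubar t) →
          (∀ᵐ t ∂(volume : Measure ℝ), t ∈ Icc 0 T → u t = 0) ∧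
          (∀ᵐ t ∂(volume : Measure ℝ), t ∈ Icc 0 T → g t (u t) ≤ 0)) ∧
       -- (c) yet the pointwise bad set is not null
       ({t ∈ Icc 0 T | ∃ v ∈ Ubar t, 0 < g t v} = U \ {0} ∧
        volume (U \ {0}) ≠ 0)) := by
  obtain ⟨V, hV⟩ := exists_isVitaliSet
  have hnull := forall_measure_eq_zero_insert (μ := volume) 0 fun s => hV.measure_eq_zero_of_subset
  have hU0 : volume (insert 0 V \ {0}) ≠ 0 := by
    rw [measure_sdiff_null (measure_singleton 0)]
    exact fun h => hV.measure_ne_zero (measure_mono_null (subset_insert 0 V) h)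
  have hU_Icc : insert 0 V ⊆ Icc 0 1 := insert_subset (by simp) hV.subset_Icc
  refine ⟨1, one_pos, insert 0 V, mem_insert 0 V, hU_Icc,
    fun hm => hU0 (measure_mono_null sdiff_subset (hnull _ subset_rfl hm)), hnull, ?_⟩
  intro H g Ubar
  have hUbar (t : ℝ) : Ubar t = insert 0 V ∩ {0, t} := argmax_eq_inter (mem_insert 0 V) t
  simp only [hUbar]
  refine ⟨fun t _ => ⟨fun ht => ?_, fun ht => ?_⟩, fun u hu hae => ?_, ?_, hU0⟩
  · rw [inter_insert_of_mem (mem_insert 0 V), inter_singleton_of_mem ht]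
  · rw [inter_insert_of_mem (mem_insert 0 V), inter_singleton_eq_empty.2 ht, insert_empty_eq]
  · have hu0 := ae_eq_zero_of_ae_mem_inter_pair hnull measurableSet_Icc hu hae
    refine ⟨hu0, ?_⟩
    filter_upwards [hu0] with t ht htI
    simp [g, ht htI]
  · ext t
    constructor
    · rintro ⟨-, v, ⟨hvU, rfl | rfl⟩, hv⟩
      exacts [absurd hv (by simp [g]), ⟨hvU, fun h => by simp [g, mem_singleton_iff.1 h] at hv⟩]
    · rintro ⟨htU, ht0⟩
      exact ⟨hU_Icc htU, t, ⟨htU, Or.inr rfl⟩, pow_two_pos_of_ne_zero ht0⟩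
end
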